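/- arXiv:1409.3897 — 8 statements merged into one kernel-verified Lean document; each statement's English description precedes it below -/
import Mathlib

section
/- Let X be a finite set, let w : X → [0,∞), and let S' ⊆ S be nonempty finite subsets of X with Σ_{x∈S'} w(x) > 0. Writing W_1(T) = Σ_{x∈T} w(x), W_{1/2}(T) = Σ_{x∈T} √(w(x)), and N = |S|, one has W_1(S') ≤ (1/W_1(S')) · [ W_{1/2}(S)·W_{1/2}(S')/N + ( W_1(S') − W_{1/2}(S')²/N )^{1/2} · ( W_1(S) − W_{1/2}(S)²/N )^{1/2} ]² ≤ W_1(S). (Both quantities under the square roots are nonnegative by the Cauchy–Schwarz inequality, since W_{1/2}(T)² ≤ |T|·W_1(T) ≤ N·W_1(T) for T ⊆ S.) In particular, for a probability distribution p on {1,…,d} with product weights P^n(x⃗) = p_{x_1}⋯p_{x_n} on {1,…,d}^n, superlevel sets S = S_n(R) ⊇ S' = S_n(R') for R ≤ R', this gives P_{n,1}(R') ≤ 1 − a_n(R,R') ≤ P_{n,1}(R). -/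
open scoped BigOperators Classical
open Real

lemma sum_sub_mul' {X : Type} (S : Finset X) (f g : X → ℝ) (c d : ℝ) :
    ∑ x ∈ S, (f x - c) * (g x - d)
      = (∑ x ∈ S, f x * g x) - c * (∑ x ∈ S, g x) - d * (∑ x ∈ S, f x)
        + (S.card : ℝ) * (c * d) := by
  have h : ∑ x ∈ S, (f x - c) * (g x - d)
      = ∑ x ∈ S, (f x * g x - c * g x - d * f x + c * d) :=
    Finset.sum_congr rfl (fun x _ => by ring)
  rw [h]
  simp only [Finset.sum_add_distrib, Finset.sum_sub_distrib, ← Finset.mul_sum,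
    Finset.sum_const, nsmul_eq_mul]
  ring

lemma arith_core (A B u v N s t : ℝ) (hA : 0 < A) (hN : 0 < N)
    (hs2 : s ^ 2 = A - u ^ 2 / N) (ht2 : t ^ 2 = B - v ^ 2 / N)
    (hs0 : 0 ≤ s) (ht0 : 0 ≤ t)
    (hmain : A - u * v / N ≤ t * s) :
    A ≤ (1 / A) * (v * u / N + s * t) ^ 2 ∧ (1 / A) * (v * u / N + s * t) ^ 2 ≤ B := by
  have hKA : A ≤ v * u / N + s * t := by
    rw [show v * u / N + s * t = u * v / N + t * s by ring]
    linarith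
  have hK2 : (v * u / N + s * t) ^ 2 ≤ A * B := by
    have hA' : A = u ^ 2 / N + s ^ 2 := by rw [hs2]; ring
    have hB' : B = v ^ 2 / N + t ^ 2 := by rw [ht2]; ring
    have hc : (0:ℝ) ≤ (1 / N) * (u * t - s * v) ^ 2 := by positivity
    have hid : (v * u / N + s * t) ^ 2 + (1 / N) * (u * t - s * v) ^ 2
        = (u ^ 2 / N + s ^ 2) * (v ^ 2 / N + t ^ 2) := by
      field_simp
      ring
    rw [hA', hB']
    linarith
  constructor
  · rw [one_div, ← div_eq_inv_mul, le_div_iff₀ hA]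
    nlinarith [mul_le_mul hKA hKA hA.le (hA.le.trans hKA)]
  · rw [one_div, inv_mul_le_iff₀ hA]
    linarith

lemma main_ineq (X : Type) [Fintype X] (w : X → ℝ) (hw : ∀ x, 0 ≤ w x)
    (S' S : Finset X) (hsub : S' ⊆ S) (hne : S'.Nonempty)
    (hA : 0 < ∑ x ∈ S', w x) :
        (∑ x ∈ S', w x) ≤
            (1 / ∑ x ∈ S', w x) *
              ((∑ x ∈ S, Real.sqrt (w x)) * (∑ x ∈ S', Real.sqrt (w x)) / (S.card : ℝ) +
                Real.sqrt ((∑ x ∈ S', w x) - (∑ x ∈ S', Real.sqrt (w x)) ^ 2 / (S.card : ℝ)) *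
                  Real.sqrt ((∑ x ∈ S, w x) - (∑ x ∈ S, Real.sqrt (w x)) ^ 2 / (S.card : ℝ))) ^ 2
          ∧
          (1 / ∑ x ∈ S', w x) *
              ((∑ x ∈ S, Real.sqrt (w x)) * (∑ x ∈ S', Real.sqrt (w x)) / (S.card : ℝ) +
                Real.sqrt ((∑ x ∈ S', w x) - (∑ x ∈ S', Real.sqrt (w x)) ^ 2 / (S.card : ℝ)) *
                  Real.sqrt ((∑ x ∈ S, w x) - (∑ x ∈ S, Real.sqrt (w x)) ^ 2 / (S.card : ℝ))) ^ 2
            ≤ ∑ x ∈ S, w x := by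
  have hSne : S.Nonempty := hne.mono hsub
  have hN : (0:ℝ) < (S.card : ℝ) := by exact_mod_cast Finset.card_pos.mpr hSne
  have hinter : S ∩ S' = S' := Finset.inter_eq_right.mpr hsub
  have h1 : ∑ x ∈ S, Real.sqrt (w x) * Real.sqrt (w x) = ∑ x ∈ S, w x :=
    Finset.sum_congr rfl (fun x _ => Real.mul_self_sqrt (hw x))
  have hswap : ∀ (f : X → ℝ), ∑ x ∈ S, (if x ∈ S' then f x else 0) = ∑ x ∈ S', f x := by
    intro f
    rw [Finset.sum_ite_mem, hinter]
  have h2 : ∑ x ∈ S, Real.sqrt (w x) * (if x ∈ S' then Real.sqrt (w x) else 0)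
      = ∑ x ∈ S', w x := by
    have e : ∑ x ∈ S, Real.sqrt (w x) * (if x ∈ S' then Real.sqrt (w x) else 0)
        = ∑ x ∈ S, (if x ∈ S' then w x else 0) := by
      refine Finset.sum_congr rfl (fun x _ => ?_)
      split_ifs
      · exact Real.mul_self_sqrt (hw x)
      · ring
    rw [e, hswap]
  have h2' : (∑ x ∈ S, (if x ∈ S' then Real.sqrt (w x) else 0) *
      (if x ∈ S' then Real.sqrt (w x) else 0)) = ∑ x ∈ S', w x := by
    have e : (∑ x ∈ S, (if x ∈ S' then Real.sqrt (w x) else 0) *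
        (if x ∈ S' then Real.sqrt (w x) else 0))
        = ∑ x ∈ S, (if x ∈ S' then w x else 0) := by
      refine Finset.sum_congr rfl (fun x _ => ?_)
      split_ifs
      · exact Real.mul_self_sqrt (hw x)
      · ring
    rw [e, hswap]
  have h3 : (∑ x ∈ S, if x ∈ S' then Real.sqrt (w x) else 0) = ∑ x ∈ S', Real.sqrt (w x) :=
    hswap _
  have hNne : ((S.card : ℝ)) ≠ 0 := ne_of_gt hN
  have hF : ∑ x ∈ S, (Real.sqrt (w x) - (∑ y ∈ S, Real.sqrt (w y)) / (S.card : ℝ)) *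
      (Real.sqrt (w x) - (∑ y ∈ S, Real.sqrt (w y)) / (S.card : ℝ))
      = (∑ x ∈ S, w x) - (∑ x ∈ S, Real.sqrt (w x)) ^ 2 / (S.card : ℝ) := by
    rw [sum_sub_mul' S _ _ _ _, h1]
    field_simp
    ring
  have hG : ∑ x ∈ S, ((if x ∈ S' then Real.sqrt (w x) else 0)
        - (∑ y ∈ S', Real.sqrt (w y)) / (S.card : ℝ)) *
      ((if x ∈ S' then Real.sqrt (w x) else 0)
        - (∑ y ∈ S', Real.sqrt (w y)) / (S.card : ℝ))
      = (∑ x ∈ S', w x) - (∑ x ∈ S', Real.sqrt (w x)) ^ 2 / (S.card : ℝ) := by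
    rw [sum_sub_mul' S _ _ _ _, h2', h3]
    field_simp
    ring
  have hFG : ∑ x ∈ S, (Real.sqrt (w x) - (∑ y ∈ S, Real.sqrt (w y)) / (S.card : ℝ)) *
      ((if x ∈ S' then Real.sqrt (w x) else 0)
        - (∑ y ∈ S', Real.sqrt (w y)) / (S.card : ℝ))
      = (∑ x ∈ S', w x)
        - (∑ x ∈ S', Real.sqrt (w x)) * (∑ x ∈ S, Real.sqrt (w x)) / (S.card : ℝ) := by
    rw [sum_sub_mul' S _ _ _ _, h2, h3]
    field_simp
    ring
  have hFnn : (0:ℝ) ≤ (∑ x ∈ S, w x) - (∑ x ∈ S, Real.sqrt (w x)) ^ 2 / (S.card : ℝ) := by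
    rw [← hF]; exact Finset.sum_nonneg (fun x _ => mul_self_nonneg _)
  have hGnn : (0:ℝ) ≤ (∑ x ∈ S', w x) - (∑ x ∈ S', Real.sqrt (w x)) ^ 2 / (S.card : ℝ) := by
    rw [← hG]; exact Finset.sum_nonneg (fun x _ => mul_self_nonneg _)
  have hCS : ((∑ x ∈ S', w x)
        - (∑ x ∈ S', Real.sqrt (w x)) * (∑ x ∈ S, Real.sqrt (w x)) / (S.card : ℝ)) ^ 2
      ≤ ((∑ x ∈ S, w x) - (∑ x ∈ S, Real.sqrt (w x)) ^ 2 / (S.card : ℝ)) *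
        ((∑ x ∈ S', w x) - (∑ x ∈ S', Real.sqrt (w x)) ^ 2 / (S.card : ℝ)) := by
    have h := Finset.sum_mul_sq_le_sq_mul_sq S
      (fun x => Real.sqrt (w x) - (∑ y ∈ S, Real.sqrt (w y)) / (S.card : ℝ))
      (fun x => (if x ∈ S' then Real.sqrt (w x) else 0)
        - (∑ y ∈ S', Real.sqrt (w y)) / (S.card : ℝ))
    simp only [pow_two] at h
    rw [hFG, hF, hG] at h
    rw [pow_two]
    exact h
  have hmain : (∑ x ∈ S', w x)
        - (∑ x ∈ S', Real.sqrt (w x)) * (∑ x ∈ S, Real.sqrt (w x)) / (S.card : ℝ)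
      ≤ Real.sqrt ((∑ x ∈ S, w x) - (∑ x ∈ S, Real.sqrt (w x)) ^ 2 / (S.card : ℝ)) *
        Real.sqrt ((∑ x ∈ S', w x) - (∑ x ∈ S', Real.sqrt (w x)) ^ 2 / (S.card : ℝ)) := by
    have e1 := le_abs_self ((∑ x ∈ S', w x)
        - (∑ x ∈ S', Real.sqrt (w x)) * (∑ x ∈ S, Real.sqrt (w x)) / (S.card : ℝ))
    have e2 := (Real.sqrt_sq_eq_abs ((∑ x ∈ S', w x)
        - (∑ x ∈ S', Real.sqrt (w x)) * (∑ x ∈ S, Real.sqrt (w x)) / (S.card : ℝ))).symm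
    have e3 := Real.sqrt_le_sqrt hCS
    have e4 := Real.sqrt_mul hFnn
      ((∑ x ∈ S', w x) - (∑ x ∈ S', Real.sqrt (w x)) ^ 2 / (S.card : ℝ))
    rw [e4] at e3
    linarith
  exact arith_core (∑ x ∈ S', w x) (∑ x ∈ S, w x)
    (∑ x ∈ S', Real.sqrt (w x)) (∑ x ∈ S, Real.sqrt (w x)) (S.card : ℝ)
    (Real.sqrt ((∑ x ∈ S', w x) - (∑ x ∈ S', Real.sqrt (w x)) ^ 2 / (S.card : ℝ)))
    (Real.sqrt ((∑ x ∈ S, w x) - (∑ x ∈ S, Real.sqrt (w x)) ^ 2 / (S.card : ℝ)))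
    hA hN (Real.sq_sqrt hGnn) (Real.sq_sqrt hFnn)
    (Real.sqrt_nonneg _) (Real.sqrt_nonneg _) hmain

noncomputable def prodP {d : ℕ} (p : Fin d → ℝ) {n : ℕ} (x : Fin n → Fin d) : ℝ :=
  ∏ k, p (x k)

/-- The superlevel set `S_n(R) = {x : log P^n(x) ≥ nR}`. -/
noncomputable def SnSet (d : ℕ) (p : Fin d → ℝ) (n : ℕ) (R : ℝ) : Finset (Fin n → Fin d) :=
  Finset.univ.filter (fun x => (n : ℝ) * R ≤ Real.log (prodP p x))

noncomputable def Pn1 (d : ℕ) (p : Fin d → ℝ) (n : ℕ) (R : ℝ) : ℝ :=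
  ∑ x ∈ SnSet d p n R, prodP p x

noncomputable def PnHalf (d : ℕ) (p : Fin d → ℝ) (n : ℕ) (R : ℝ) : ℝ :=
  ∑ x ∈ SnSet d p n R, Real.sqrt (prodP p x)

noncomputable def Pn0 (d : ℕ) (p : Fin d → ℝ) (n : ℕ) (R : ℝ) : ℝ :=
  ((SnSet d p n R).card : ℝ)

/-- The quantity `a_n(R, R')`. -/
noncomputable def aFun (d : ℕ) (p : Fin d → ℝ) (n : ℕ) (R R' : ℝ) : ℝ :=
  1 - (PnHalf d p n R * PnHalf d p n R' / Pn0 d p n R +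
        Real.sqrt (Pn1 d p n R' - PnHalf d p n R' ^ 2 / Pn0 d p n R) *
          Real.sqrt (Pn1 d p n R - PnHalf d p n R ^ 2 / Pn0 d p n R)) ^ 2
      / Pn1 d p n R'

theorem stmt4 :
    (∀ (X : Type) [Fintype X] (w : X → ℝ), (∀ x, 0 ≤ w x) →
      ∀ S' S : Finset X, S' ⊆ S → S'.Nonempty → 0 < ∑ x ∈ S', w x →
        (∑ x ∈ S', w x) ≤
            (1 / ∑ x ∈ S', w x) *
              ((∑ x ∈ S, Real.sqrt (w x)) * (∑ x ∈ S', Real.sqrt (w x)) / (S.card : ℝ) +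
                Real.sqrt ((∑ x ∈ S', w x) - (∑ x ∈ S', Real.sqrt (w x)) ^ 2 / (S.card : ℝ)) *
                  Real.sqrt ((∑ x ∈ S, w x) - (∑ x ∈ S, Real.sqrt (w x)) ^ 2 / (S.card : ℝ))) ^ 2
          ∧
          (1 / ∑ x ∈ S', w x) *
              ((∑ x ∈ S, Real.sqrt (w x)) * (∑ x ∈ S', Real.sqrt (w x)) / (S.card : ℝ) +
                Real.sqrt ((∑ x ∈ S', w x) - (∑ x ∈ S', Real.sqrt (w x)) ^ 2 / (S.card : ℝ)) *
                  Real.sqrt ((∑ x ∈ S, w x) - (∑ x ∈ S, Real.sqrt (w x)) ^ 2 / (S.card : ℝ))) ^ 2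
            ≤ ∑ x ∈ S, w x)
    ∧
    (∀ (d n : ℕ) (p : Fin d → ℝ), (∀ i, 0 < p i) → (∑ i, p i = 1) →
      ∀ R R' : ℝ, R ≤ R' → (SnSet d p n R').Nonempty →
        Pn1 d p n R' ≤ 1 - aFun d p n R R' ∧ 1 - aFun d p n R R' ≤ Pn1 d p n R) := by
  constructor
  · intro X _ w hw S' S hsub hne hApos
    exact main_ineq X w hw S' S hsub hne hApos
  · intro d n p hp _ R R' hRR' hne
    have hpos : ∀ x : Fin n → Fin d, 0 < prodP p x :=
      fun x => Finset.prod_pos (fun k _ => hp _)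
    have hsub : SnSet d p n R' ⊆ SnSet d p n R := by
      intro x hx
      simp only [SnSet, Finset.mem_filter, Finset.mem_univ, true_and] at hx ⊢
      have : (n : ℝ) * R ≤ (n : ℝ) * R' :=
        mul_le_mul_of_nonneg_left hRR' (Nat.cast_nonneg n)
      linarith
    have hApos : 0 < ∑ x ∈ SnSet d p n R', prodP p x :=
      Finset.sum_pos (fun x _ => hpos x) hne
    obtain ⟨h1, h2⟩ := main_ineq _ (prodP p) (fun x => (hpos x).le) _ _ hsub hne hApos
    have hform : 1 - aFun d p n R R'
        = (1 / Pn1 d p n R') *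
          (PnHalf d p n R * PnHalf d p n R' / Pn0 d p n R +
            Real.sqrt (Pn1 d p n R' - PnHalf d p n R' ^ 2 / Pn0 d p n R) *
              Real.sqrt (Pn1 d p n R - PnHalf d p n R ^ 2 / Pn0 d p n R)) ^ 2 := by
      unfold aFun
      ring
    rw [hform]
    unfold Pn1 PnHalf Pn0
    exact ⟨h1, h2⟩
end

section
/- Let p = (p_1,…,p_d) be a non-uniform probability distribution on {1,…,d} with all p_i > 0, and let P_{1/2} denote the distribution P_{1/2}(i) = √p_i / Σ_j √p_j. Then for every r with 0 ≤ r ≤ D(P_{1/2}‖p), the minimum over all probability distributions Q on {1,…,d} satisfying D(Q‖p) ≤ r of the quantity D(Q‖p) − H(Q) equals sup_{0 ≤ s < 1} [ (−2s/(1−s))·r − H_{(1+s)/2}(p) ]. -/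
open scoped BigOperators
open Real

/-- `Q` is a probability vector. -/
def IsProbVec {d : ℕ} (Q : Fin d → ℝ) : Prop :=
  (∀ i, 0 ≤ Q i) ∧ ∑ i, Q i = 1

/-- Shannon entropy (natural log). -/
noncomputable def shannonH {d : ℕ} (p : Fin d → ℝ) : ℝ :=
  -∑ i, p i * Real.log (p i)

/-- Rényi entropy of order `a ≠ 1` (natural log). -/
noncomputable def renyiH {d : ℕ} (p : Fin d → ℝ) (a : ℝ) : ℝ :=
  (1 / (1 - a)) * Real.log (∑ i, p i ^ a)

/-- Relative entropy `D(Q‖P)` (with the convention `0 log 0 = 0`). -/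
noncomputable def relEnt {d : ℕ} (Q P : Fin d → ℝ) : ℝ :=
  ∑ i, Q i * Real.log (Q i / P i)

/-- The distribution `P_{1/2}(i) = √p_i / Σ_j √p_j`. -/
noncomputable def pHalf {d : ℕ} (p : Fin d → ℝ) : Fin d → ℝ :=
  fun i => Real.sqrt (p i) / ∑ j, Real.sqrt (p j)

/-- The tilted distribution `P_θ(i) = p_i^{1−θ} / Σ_j p_j^{1−θ}`. -/
noncomputable def pTilt {d : ℕ} (p : Fin d → ℝ) (θ : ℝ) : Fin d → ℝ :=
  fun i => p i ^ (1 - θ) / ∑ j, p j ^ (1 - θ)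

section aux
variable {d : ℕ}

lemma gibbs_aux (Q P : Fin d → ℝ) (hQ0 : ∀ i, 0 ≤ Q i) (hQ1 : ∑ i, Q i = 1)
    (hP : ∀ i, 0 < P i) (hP1 : ∑ i, P i = 1) : 0 ≤ relEnt Q P := by
  have key : ∀ i, Q i - P i ≤ Q i * Real.log (Q i / P i) := by
    intro i
    rcases eq_or_lt_of_le (hQ0 i) with h | h
    · simp [← h]
      linarith [(hP i).le]
    · have h1 : Real.log (P i / Q i) ≤ P i / Q i - 1 :=
        Real.log_le_sub_one_of_pos (div_pos (hP i) h)
      have h2 : Real.log (P i / Q i) = - Real.log (Q i / P i) := by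
        rw [← Real.log_inv]
        congr 1
        field_simp
      rw [h2] at h1
      have h3 := mul_le_mul_of_nonneg_left h1 h.le
      have h4 : Q i * (P i / Q i - 1) = P i - Q i := by field_simp
      rw [mul_neg, h4] at h3
      linarith
  calc (0:ℝ) = ∑ i, (Q i - P i) := by rw [Finset.sum_sub_distrib, hQ1, hP1]; ring
  _ ≤ _ := Finset.sum_le_sum (fun i _ => key i)

lemma relEnt_self_aux (Q : Fin d → ℝ) (h : ∀ i, 0 < Q i) : relEnt Q Q = 0 := by
  unfold relEnt
  apply Finset.sum_eq_zero
  intro i _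
  rw [div_self (h i).ne', Real.log_one, mul_zero]

variable (p : Fin d → ℝ)

lemma sum_rpow_pos_aux [Nonempty (Fin d)] (hpos : ∀ i, 0 < p i) (β : ℝ) :
    0 < ∑ i, p i ^ β :=
  Finset.sum_pos (fun i _ => Real.rpow_pos_of_pos (hpos i) β) Finset.univ_nonempty

lemma pTilt_pos_aux [Nonempty (Fin d)] (hpos : ∀ i, 0 < p i) (θ : ℝ) (i : Fin d) :
    0 < pTilt p θ i :=
  div_pos (Real.rpow_pos_of_pos (hpos i) _) (sum_rpow_pos_aux p hpos _)

lemma pTilt_sum_aux [Nonempty (Fin d)] (hpos : ∀ i, 0 < p i) (θ : ℝ) :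
    ∑ i, pTilt p θ i = 1 := by
  unfold pTilt
  rw [← Finset.sum_div, div_self (sum_rpow_pos_aux p hpos _).ne']

lemma keyIdentity [Nonempty (Fin d)] (hpos : ∀ i, 0 < p i) (θ : ℝ)
    (Q : Fin d → ℝ) (hQ0 : ∀ i, 0 ≤ Q i) (hQ1 : ∑ i, Q i = 1) :
    relEnt Q (pTilt p θ) =
      (1 - θ) * relEnt Q p - θ * shannonH Q + Real.log (∑ i, p i ^ (1 - θ)) := by
  have hA : 0 < ∑ j, p j ^ (1 - θ) := sum_rpow_pos_aux p hpos _
  have term : ∀ i, Q i * Real.log (Q i / pTilt p θ i) =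
      (1 - θ) * (Q i * Real.log (Q i / p i)) + θ * (Q i * Real.log (Q i))
        + Q i * Real.log (∑ j, p j ^ (1 - θ)) := by
    intro i
    rcases eq_or_lt_of_le (hQ0 i) with h | h
    · simp [← h]
    · have hp := hpos i
      unfold pTilt
      rw [Real.log_div h.ne' (div_pos (Real.rpow_pos_of_pos hp _) hA).ne',
        Real.log_div (Real.rpow_pos_of_pos hp _).ne' hA.ne',
        Real.log_div h.ne' hp.ne', Real.log_rpow hp]
      ring
  unfold relEnt shannonH
  calc ∑ i, Q i * Real.log (Q i / pTilt p θ i)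
      = ∑ i, ((1 - θ) * (Q i * Real.log (Q i / p i)) + θ * (Q i * Real.log (Q i))
          + Q i * Real.log (∑ j, p j ^ (1 - θ))) :=
        Finset.sum_congr rfl (fun i _ => term i)
    _ = (1 - θ) * (∑ i, Q i * Real.log (Q i / p i)) + θ * (∑ i, Q i * Real.log (Q i))
          + (∑ i, Q i) * Real.log (∑ j, p j ^ (1 - θ)) := by
        rw [Finset.sum_add_distrib, Finset.sum_add_distrib, ← Finset.mul_sum,
          ← Finset.mul_sum, ← Finset.sum_mul]
    _ = _ := by rw [hQ1]; ring

lemma tilt_relEnt [Nonempty (Fin d)] (hpos : ∀ i, 0 < p i) (θ : ℝ) :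
    relEnt (pTilt p θ) p =
      -θ * (∑ i, p i ^ (1 - θ) * Real.log (p i)) / (∑ i, p i ^ (1 - θ))
        - Real.log (∑ i, p i ^ (1 - θ)) := by
  have hA : 0 < ∑ j, p j ^ (1 - θ) := sum_rpow_pos_aux p hpos _
  have term : ∀ i, pTilt p θ i * Real.log (pTilt p θ i / p i) =
      -θ * (p i ^ (1 - θ) * Real.log (p i)) / (∑ j, p j ^ (1 - θ))
        - pTilt p θ i * Real.log (∑ j, p j ^ (1 - θ)) := by
    intro i
    have hp := hpos i
    unfold pTilt
    rw [div_div, Real.log_div (Real.rpow_pos_of_pos hp _).ne'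
        (mul_pos hA hp).ne', Real.log_mul hA.ne' hp.ne', Real.log_rpow hp]
    field_simp
    ring
  unfold relEnt
  rw [Finset.sum_congr rfl (fun i _ => term i), Finset.sum_sub_distrib,
    ← Finset.sum_div, ← Finset.sum_mul, ← Finset.mul_sum, pTilt_sum_aux p hpos]
  · ring

lemma contG [Nonempty (Fin d)] (hpos : ∀ i, 0 < p i) :
    Continuous (fun θ : ℝ =>
      -θ * (∑ i, p i ^ (1 - θ) * Real.log (p i)) / (∑ i, p i ^ (1 - θ))
        - Real.log (∑ i, p i ^ (1 - θ))) := by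
  have hrw : ∀ (θ : ℝ) (i : Fin d), p i ^ (1 - θ) = Real.exp (Real.log (p i) * (1 - θ)) :=
    fun θ i => Real.rpow_def_of_pos (hpos i) _
  have hA : Continuous (fun θ : ℝ => ∑ i, p i ^ (1 - θ)) := by
    simp only [hrw]
    exact continuous_finset_sum _ (fun i _ => by fun_prop)
  have hApos : ∀ θ : ℝ, (0:ℝ) < ∑ i, p i ^ (1 - θ) :=
    fun θ => sum_rpow_pos_aux p hpos _
  have hB : Continuous (fun θ : ℝ => ∑ i, p i ^ (1 - θ) * Real.log (p i)) := by
    simp only [hrw]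
    exact continuous_finset_sum _ (fun i _ => by fun_prop)
  exact ((continuous_neg.mul hB).div hA (fun θ => (hApos θ).ne')).sub
    (hA.log (fun θ => (hApos θ).ne'))

end aux

theorem stmt5 {d : ℕ} (p : Fin d → ℝ)
    (hpos : ∀ i, 0 < p i) (hsum : ∑ i, p i = 1)
    (hnonunif : ∃ i j, p i ≠ p j)
    (r : ℝ) (hr0 : 0 ≤ r) (hr1 : r ≤ relEnt (pHalf p) p) :
    IsLeast { v : ℝ | ∃ Q : Fin d → ℝ, IsProbVec Q ∧ relEnt Q p ≤ r ∧
        v = relEnt Q p - shannonH Q }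
      (⨆ s : Set.Ico (0 : ℝ) 1,
        (-2 * (s : ℝ) / (1 - (s : ℝ))) * r - renyiH p ((1 + (s : ℝ)) / 2)) := by
  have hne : Nonempty (Fin d) := by
    rcases Nat.eq_zero_or_pos d with h | h
    · subst h; simp at hsum
    · exact ⟨⟨0, h⟩⟩
  haveI := hne
  haveI : Nonempty (Set.Ico (0 : ℝ) 1) := ⟨⟨0, by constructor <;> norm_num⟩⟩
  have hprob_p : IsProbVec p := ⟨fun i => (hpos i).le, hsum⟩
  have hDpp : relEnt p p = 0 := relEnt_self_aux p hpos
  -- the key lower-bound (weak duality) inequality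
  have h_low : ∀ Q : Fin d → ℝ, IsProbVec Q → relEnt Q p ≤ r →
      ∀ s : Set.Ico (0 : ℝ) 1,
        (-2 * (s : ℝ) / (1 - (s : ℝ))) * r - renyiH p ((1 + (s : ℝ)) / 2)
          ≤ relEnt Q p - shannonH Q := by
    rintro Q ⟨hQ0, hQ1⟩ hQr ⟨s, hs0, hs1⟩
    set θ : ℝ := (1 - s) / 2 with hθdef
    have hθpos : 0 < θ := by simp only [hθdef]; linarith
    have hgibbs : 0 ≤ relEnt Q (pTilt p θ) :=
      gibbs_aux Q _ hQ0 hQ1 (pTilt_pos_aux p hpos θ) (pTilt_sum_aux p hpos θ)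
    have hkey := keyIdentity p hpos θ Q hQ0 hQ1
    rw [hkey] at hgibbs
    have h2 : (1 - 2*θ) * relEnt Q p ≤ (1 - 2*θ) * r :=
      mul_le_mul_of_nonneg_left hQr (by simp only [hθdef]; linarith)
    have hren : renyiH p ((1 + s) / 2) = Real.log (∑ i, p i ^ (1 - θ)) / θ := by
      unfold renyiH
      have e1 : (1:ℝ) - (1 + s)/2 = θ := by simp only [hθdef]; ring
      have e2 : (1 + s)/2 = 1 - θ := by simp only [hθdef]; ring
      rw [e1, e2, one_div, inv_mul_eq_div]
    have h1s : (1:ℝ) - s = 2*θ := by simp only [hθdef]; ring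
    show (-2 * s / (1 - s)) * r - renyiH p ((1 + s) / 2) ≤ relEnt Q p - shannonH Q
    rw [hren, h1s]
    have hrw : -2 * s / (2*θ) * r - Real.log (∑ i, p i ^ (1 - θ)) / θ
        = (-(s*r) - Real.log (∑ i, p i ^ (1 - θ))) / θ := by
      field_simp
    rw [hrw, div_le_iff₀ hθpos]
    have hs2 : s = 1 - 2*θ := by simp only [hθdef]; ring
    have h3 : s * r = (1 - 2*θ) * r := by rw [hs2]
    nlinarith [hgibbs, h2, h3]
  -- bounded above
  have hbdd : BddAbove (Set.range fun s : Set.Ico (0 : ℝ) 1 =>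
      (-2 * (s : ℝ) / (1 - (s : ℝ))) * r - renyiH p ((1 + (s : ℝ)) / 2)) := by
    refine ⟨relEnt p p - shannonH p, ?_⟩
    rintro v ⟨s, rfl⟩
    exact h_low p hprob_p (by rw [hDpp]; exact hr0) s
  have hlb : ∀ v ∈ { v : ℝ | ∃ Q : Fin d → ℝ, IsProbVec Q ∧ relEnt Q p ≤ r ∧
      v = relEnt Q p - shannonH Q },
      (⨆ s : Set.Ico (0 : ℝ) 1,
        (-2 * (s : ℝ) / (1 - (s : ℝ))) * r - renyiH p ((1 + (s : ℝ)) / 2)) ≤ v := by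
    rintro v ⟨Q, hQ, hQr, rfl⟩
    exact ciSup_le (h_low Q hQ hQr)
  constructor
  swap
  · exact hlb
  -- membership
  rcases eq_or_lt_of_le hr0 with hr | hr
  · -- r = 0
    subst hr
    refine ⟨p, hprob_p, hDpp.le, ?_⟩
    rw [hDpp, zero_sub]
    apply le_antisymm
    · have := ciSup_le (fun s => h_low p hprob_p hDpp.le s)
      rw [hDpp, zero_sub] at this
      exact this
    · -- -shannonH p ≤ sup, via the derivative limit
      apply le_of_forall_sub_le
      intro ε hε
      set F : ℝ → ℝ := fun β => Real.log (∑ i, p i ^ β) with hFdef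
      have hsum1 : (∑ i, p i ^ (1:ℝ)) = 1 := by
        simp only [Real.rpow_one]; exact hsum
      have hF1 : F 1 = 0 := by
        show Real.log (∑ i, p i ^ (1:ℝ)) = 0
        rw [hsum1, Real.log_one]
      have hderiv : HasDerivAt F (∑ i, p i * Real.log (p i)) 1 := by
        have hsumD : HasDerivAt (fun β : ℝ => ∑ i, p i ^ β)
            (∑ i, p i * Real.log (p i)) 1 := by
          apply HasDerivAt.fun_sum
          intro i _
          have h := (Real.hasStrictDerivAt_const_rpow (hpos i) 1).hasDerivAt
          rwa [Real.rpow_one] at h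
        have h := hsumD.log (by rw [hsum1]; norm_num)
        rwa [hsum1, div_one] at h
      have T : Filter.Tendsto (slope F 1) (nhdsWithin 1 {(1:ℝ)}ᶜ)
          (nhds (∑ i, p i * Real.log (p i))) :=
        hasDerivAt_iff_tendsto_slope.mp hderiv
      have T' : Filter.Tendsto (slope F 1) (nhdsWithin 1 (Set.Iio (1:ℝ)))
          (nhds (∑ i, p i * Real.log (p i))) :=
        T.mono_left (nhdsWithin_mono 1 (fun x hx => ne_of_lt hx))
      have hev1 : ∀ᶠ β in nhdsWithin 1 (Set.Iio (1:ℝ)),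
          (∑ i, p i * Real.log (p i)) - ε < slope F 1 β :=
        T' (eventually_gt_nhds (by linarith))
      have hev2 : ∀ᶠ β in nhdsWithin 1 (Set.Iio (1:ℝ)), β ∈ Set.Ioo (1/2:ℝ) 1 :=
        Ioo_mem_nhdsLT_of_mem (by constructor <;> norm_num)
      obtain ⟨β, hβslope, hβmem⟩ := (hev1.and hev2).exists
      have hβ1 : β < 1 := hβmem.2
      have hβhalf : 1/2 < β := hβmem.1
      have hsmem : (2*β - 1 : ℝ) ∈ Set.Ico (0:ℝ) 1 := ⟨by linarith, by linarith⟩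
      have hφ : (-2 * (2*β-1) / (1 - (2*β-1))) * 0 - renyiH p ((1 + (2*β-1)) / 2)
          = slope F 1 β := by
        rw [mul_zero, zero_sub]
        have e2 : (1 + (2*β-1))/2 = β := by ring
        rw [e2, slope_def_field, hF1, sub_zero]
        unfold renyiH
        have h1 : (1:ℝ) - β ≠ 0 := sub_ne_zero_of_ne hβ1.ne'
        have h2 : β - 1 ≠ 0 := sub_ne_zero_of_ne hβ1.ne
        show -(1 / (1 - β) * Real.log (∑ i, p i ^ β)) = Real.log (∑ i, p i ^ β) / (β - 1)
        field_simp
        ring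
      have hle := le_ciSup hbdd ⟨2*β - 1, hsmem⟩
      simp only at hle
      rw [hφ] at hle
      have hH : -shannonH p = ∑ i, p i * Real.log (p i) := by
        unfold shannonH; ring
      rw [hH]
      linarith
  · -- r > 0 : IVT
    have hGfun : (fun θ : ℝ => relEnt (pTilt p θ) p) = (fun θ : ℝ =>
        -θ * (∑ i, p i ^ (1 - θ) * Real.log (p i)) / (∑ i, p i ^ (1 - θ))
          - Real.log (∑ i, p i ^ (1 - θ))) := funext (tilt_relEnt p hpos)
    have hGcont : Continuous (fun θ : ℝ => relEnt (pTilt p θ) p) := by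
      rw [hGfun]; exact contG p hpos
    have hpTilt0 : pTilt p (0:ℝ) = p := by
      funext i
      unfold pTilt
      rw [sub_zero]
      simp only [Real.rpow_one, hsum, div_one]
    have hG0 : relEnt (pTilt p (0:ℝ)) p = 0 := by rw [hpTilt0]; exact hDpp
    have hpTiltHalf : pTilt p (1/2 : ℝ) = pHalf p := by
      funext i
      unfold pTilt pHalf
      rw [show (1:ℝ) - 1/2 = 1/2 by norm_num]
      simp [Real.sqrt_eq_rpow]
    have hGhalf : relEnt (pTilt p (1/2:ℝ)) p = relEnt (pHalf p) p := by
      rw [hpTiltHalf]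
    have hIVT := intermediate_value_Icc (by norm_num : (0:ℝ) ≤ 1/2)
      hGcont.continuousOn
    obtain ⟨θ, hθIcc, hGθ⟩ := hIVT ⟨by
      show relEnt (pTilt p (0:ℝ)) p ≤ r
      rw [hG0]; exact hr.le, by
      show r ≤ relEnt (pTilt p (1/2:ℝ)) p
      rw [hGhalf]; exact hr1⟩
    have hDQ : relEnt (pTilt p θ) p = r := hGθ
    have hθpos : 0 < θ := by
      rcases eq_or_lt_of_le hθIcc.1 with h | h
      · exfalso
        rw [← h] at hDQ
        rw [hG0] at hDQ
        linarith
      · exact h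
    have hθhalf : θ ≤ 1/2 := hθIcc.2
    have hQ0 : ∀ i, 0 ≤ pTilt p θ i := fun i => (pTilt_pos_aux p hpos θ i).le
    have hQ1 : ∑ i, pTilt p θ i = 1 := pTilt_sum_aux p hpos θ
    have hQprob : IsProbVec (pTilt p θ) := ⟨hQ0, hQ1⟩
    have hsmem : (1 - 2*θ : ℝ) ∈ Set.Ico (0:ℝ) 1 := ⟨by linarith, by linarith⟩
    have hkey2 := keyIdentity p hpos θ (pTilt p θ) hQ0 hQ1
    rw [relEnt_self_aux _ (pTilt_pos_aux p hpos θ), hDQ] at hkey2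
    have hφeq : (-2 * (1 - 2*θ) / (1 - (1 - 2*θ))) * r - renyiH p ((1 + (1 - 2*θ)) / 2)
        = relEnt (pTilt p θ) p - shannonH (pTilt p θ) := by
      rw [hDQ]
      unfold renyiH
      rw [show (1 + (1 - 2*θ))/2 = 1 - θ by ring, show (1:ℝ) - (1 - θ) = θ by ring,
        show (1:ℝ) - (1 - 2*θ) = 2*θ by ring]
      have hθne : θ ≠ 0 := hθpos.ne'
      field_simp
      nlinarith [hkey2]
    have le1 : (⨆ s : Set.Ico (0 : ℝ) 1,
        (-2 * (s : ℝ) / (1 - (s : ℝ))) * r - renyiH p ((1 + (s : ℝ)) / 2))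
          ≤ relEnt (pTilt p θ) p - shannonH (pTilt p θ) :=
      ciSup_le (h_low _ hQprob hDQ.le)
    have le2 : relEnt (pTilt p θ) p - shannonH (pTilt p θ)
        ≤ (⨆ s : Set.Ico (0 : ℝ) 1,
          (-2 * (s : ℝ) / (1 - (s : ℝ))) * r - renyiH p ((1 + (s : ℝ)) / 2)) := by
      have hle := le_ciSup hbdd ⟨1 - 2*θ, hsmem⟩
      simp only at hle
      rw [hφeq] at hle
      exact hle
    exact ⟨pTilt p θ, hQprob, hDQ.le, le_antisymm le1 le2⟩
end

section
/- Let p = (p_1,…,p_d) be a non-uniform probability distribution on {1,…,d} with all p_i > 0. For θ ∈ (0, 1/2], let P_θ be the tilted distribution P_θ(i) = p_i^{1−θ} / Σ_j p_j^{1−θ}, and set r = D(P_θ‖p). Then D(P_θ‖p) − H(P_θ) = sup_{0 ≤ s < 1} [ (−2s/(1−s))·r − H_{(1+s)/2}(p) ]. -/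
open scoped BigOperators
open Real

theorem stmt7 {d : ℕ} (p : Fin d → ℝ)
    (hpos : ∀ i, 0 < p i) (hsum : ∑ i, p i = 1)
    (hnonunif : ∃ i j, p i ≠ p j)
    (θ : ℝ) (hθ : θ ∈ Set.Ioc (0 : ℝ) (1 / 2)) :
    relEnt (pTilt p θ) p - shannonH (pTilt p θ) =
      ⨆ s : Set.Ico (0 : ℝ) 1,
        (-2 * (s : ℝ) / (1 - (s : ℝ))) * relEnt (pTilt p θ) p -
          renyiH p ((1 + (s : ℝ)) / 2) := by
  obtain ⟨hθ0, hθ2⟩ := hθ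
  obtain ⟨i0, -, -⟩ := hnonunif
  set Z : ℝ := ∑ j, p j ^ (1 - θ) with hZdef
  have hZ : 0 < Z :=
    Finset.sum_pos (fun j _ => Real.rpow_pos_of_pos (hpos j) _) ⟨i0, Finset.mem_univ i0⟩
  have hQpos : ∀ i, 0 < pTilt p θ i := fun i =>
    div_pos (Real.rpow_pos_of_pos (hpos i) _) hZ
  have hQsum : ∑ i, pTilt p θ i = 1 := by
    simp only [pTilt, ← Finset.sum_div, ← hZdef]
    exact div_self hZ.ne'
  set E : ℝ := ∑ i, pTilt p θ i * Real.log (p i) with hE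
  set L : ℝ := Real.log Z with hL
  have hlogQ : ∀ i, Real.log (pTilt p θ i) = (1 - θ) * Real.log (p i) - L := by
    intro i
    rw [pTilt]
    rw [Real.log_div (Real.rpow_pos_of_pos (hpos i) _).ne' hZ.ne',
      Real.log_rpow (hpos i)]
  -- the value of the relative entropy
  have hr : relEnt (pTilt p θ) p = -θ * E - L := by
    rw [relEnt]
    have h1 : ∀ i : Fin d, pTilt p θ i * Real.log (pTilt p θ i / p i)
        = -θ * (pTilt p θ i * Real.log (p i)) - L * pTilt p θ i := by
      intro i
      rw [Real.log_div (hQpos i).ne' (hpos i).ne', hlogQ i]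
      ring
    rw [Finset.sum_congr rfl fun i _ => h1 i, Finset.sum_sub_distrib,
      ← Finset.mul_sum, ← Finset.mul_sum, ← hE, hQsum]
    ring
  -- the value of the Shannon entropy
  have hH : shannonH (pTilt p θ) = -((1 - θ) * E) + L := by
    rw [shannonH]
    have h1 : ∀ i : Fin d, pTilt p θ i * Real.log (pTilt p θ i)
        = (1 - θ) * (pTilt p θ i * Real.log (p i)) - L * pTilt p θ i := by
      intro i
      rw [hlogQ i]; ring
    rw [Finset.sum_congr rfl fun i _ => h1 i, Finset.sum_sub_distrib,
      ← Finset.mul_sum, ← Finset.mul_sum, ← hE, hQsum]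
    ring
  -- key Jensen-type (convexity of the log-partition function) inequality
  have key : ∀ c : ℝ, L + c * E ≤ Real.log (∑ i, p i ^ (1 - θ + c)) := by
    intro c
    have hsplit : ∑ i, p i ^ (1 - θ + c) = Z * ∑ i, pTilt p θ i * p i ^ c := by
      rw [Finset.mul_sum]
      refine Finset.sum_congr rfl fun i _ => ?_
      rw [pTilt, Real.rpow_add (hpos i)]
      field_simp
      rw [← hZdef, mul_div_assoc, div_self hZ.ne', mul_one]
    have hgm : Real.exp (c * E) ≤ ∑ i, pTilt p θ i * p i ^ c := by
      have h := Real.geom_mean_le_arith_mean_weighted Finset.univ (pTilt p θ)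
        (fun i => p i ^ c) (fun i _ => (hQpos i).le) hQsum
        (fun i _ => (Real.rpow_pos_of_pos (hpos i) c).le)
      have hprod : ∏ i, (p i ^ c) ^ pTilt p θ i = Real.exp (c * E) := by
        have h2 : ∀ i : Fin d, (p i ^ c) ^ pTilt p θ i
            = Real.exp (c * (pTilt p θ i * Real.log (p i))) := by
          intro i
          rw [Real.rpow_def_of_pos (Real.rpow_pos_of_pos (hpos i) c),
            Real.log_rpow (hpos i)]
          congr 1
          ring
        rw [Finset.prod_congr rfl fun i _ => h2 i, ← Real.exp_sum, ← Finset.mul_sum, ← hE]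
      rw [hprod] at h
      exact h
    have hpossum : 0 < ∑ i, pTilt p θ i * p i ^ c :=
      lt_of_lt_of_le (Real.exp_pos _) hgm
    rw [hsplit, Real.log_mul hZ.ne' hpossum.ne', ← hL]
    have := Real.log_le_log (Real.exp_pos _) hgm
    rw [Real.log_exp] at this
    linarith
  -- helper: rewrite each term of the supremum family
  have hren : ∀ s : ℝ, s < 1 → renyiH p ((1 + s) / 2)
      = (2 / (1 - s)) * Real.log (∑ i, p i ^ (1 - θ + (θ - (1 - s) / 2))) := by
    intro s hs
    rw [renyiH]
    congr 1
    · have h1 : 1 - (1 + s) / 2 = (1 - s) / 2 := by ring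
      rw [h1, one_div_div]
    · congr 1
      refine Finset.sum_congr rfl fun i _ => ?_
      congr 1
      ring
  set B : ℝ := (1 - 2 * θ) * E - 2 * L with hB
  -- every term is at most B
  have hbound : ∀ s : Set.Ico (0 : ℝ) 1,
      (-2 * (s : ℝ) / (1 - (s : ℝ))) * relEnt (pTilt p θ) p -
        renyiH p ((1 + (s : ℝ)) / 2) ≤ B := by
    rintro ⟨s, hs0, hs1⟩
    have h1s : 0 < 1 - s := by linarith
    have hkey := key (θ - (1 - s) / 2)
    have h2 : (2 / (1 - s)) * (L + (θ - (1 - s) / 2) * E)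
        ≤ renyiH p ((1 + s) / 2) := by
      rw [hren s hs1]
      exact mul_le_mul_of_nonneg_left hkey (by positivity)
    have h3 : (-2 * s / (1 - s)) * (-θ * E - L)
        - (2 / (1 - s)) * (L + (θ - (1 - s) / 2) * E) = B := by
      rw [hB]
      field_simp
      ring
    rw [hr]
    calc (-2 * s / (1 - s)) * (-θ * E - L) - renyiH p ((1 + s) / 2)
        ≤ (-2 * s / (1 - s)) * (-θ * E - L)
          - (2 / (1 - s)) * (L + (θ - (1 - s) / 2) * E) := by linarith
      _ = B := h3
  -- the value at s = 1 - 2 θ is exactly B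
  have hmem : (1 - 2 * θ) ∈ Set.Ico (0 : ℝ) 1 := ⟨by linarith, by linarith⟩
  have hval : (-2 * (1 - 2 * θ) / (1 - (1 - 2 * θ))) * relEnt (pTilt p θ) p -
      renyiH p ((1 + (1 - 2 * θ)) / 2) = B := by
    have hs1 : (1 : ℝ) - 2 * θ < 1 := by linarith
    rw [hr, hren _ hs1]
    have hc : θ - (1 - (1 - 2 * θ)) / 2 = 0 := by ring
    rw [hc]
    have hz : ∑ i, p i ^ (1 - θ + (0 : ℝ)) = Z := by
      rw [hZdef]
      exact Finset.sum_congr rfl fun i _ => by norm_num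
    rw [hz, ← hL, hB]
    have hθne : θ ≠ 0 := hθ0.ne'
    field_simp
    ring
  -- conclude
  have hLHS : relEnt (pTilt p θ) p - shannonH (pTilt p θ) = B := by
    rw [hr, hH, hB]; ring
  rw [hLHS]
  have hbdd : BddAbove (Set.range fun s : Set.Ico (0 : ℝ) 1 =>
      (-2 * (s : ℝ) / (1 - (s : ℝ))) * relEnt (pTilt p θ) p -
        renyiH p ((1 + (s : ℝ)) / 2)) := by
    refine ⟨B, ?_⟩
    rintro x ⟨s, rfl⟩
    exact hbound s
  refine le_antisymm ?_ (ciSup_le hbound)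
  have h := le_ciSup hbdd (⟨1 - 2 * θ, hmem⟩ : Set.Ico (0 : ℝ) 1)
  rw [hval] at h
  exact h
end

section
/- Let p = (p_1,…,p_d) be a non-uniform probability distribution on {1,…,d} with all p_i > 0. For θ ∈ (0, 1/2], let P_θ be the tilted distribution P_θ(i) = p_i^{1−θ} / Σ_j p_j^{1−θ}. Then the minimum over all probability distributions Q on {1,…,d} satisfying D(Q‖p) ≤ D(P_θ‖p) of D(Q‖p) − H(Q) equals D(P_θ‖p) − H(P_θ). -/
open scoped BigOperators
open Real

theorem stmt8 {d : ℕ} (p : Fin d → ℝ)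
    (hpos : ∀ i, 0 < p i) (hsum : ∑ i, p i = 1)
    (hnonunif : ∃ i j, p i ≠ p j)
    (θ : ℝ) (hθ : θ ∈ Set.Ioc (0 : ℝ) (1 / 2)) :
    IsLeast { v : ℝ | ∃ Q : Fin d → ℝ, IsProbVec Q ∧
        relEnt Q p ≤ relEnt (pTilt p θ) p ∧ v = relEnt Q p - shannonH Q }
      (relEnt (pTilt p θ) p - shannonH (pTilt p θ)) := by
  obtain ⟨hθ0, hθ2⟩ := hθ
  have hne : (Finset.univ : Finset (Fin d)).Nonempty := by
    by_contra h
    rw [Finset.not_nonempty_iff_eq_empty] at h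
    rw [h, Finset.sum_empty] at hsum
    norm_num at hsum
  set Z : ℝ := ∑ j, p j ^ (1 - θ) with hZ
  have hZpos : 0 < Z := Finset.sum_pos (fun i _ => Real.rpow_pos_of_pos (hpos i) _) hne
  set P : Fin d → ℝ := pTilt p θ with hP
  have hPpos : ∀ i, 0 < P i := fun i => div_pos (Real.rpow_pos_of_pos (hpos i) _) hZpos
  have hPsum : ∑ i, P i = 1 := by
    simp only [hP, pTilt]
    rw [← Finset.sum_div, ← hZ, div_self hZpos.ne']
  have hPprob : IsProbVec P := ⟨fun i => (hPpos i).le, hPsum⟩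
  -- key Lagrangian identity
  have key : ∀ Q : Fin d → ℝ, IsProbVec Q →
      θ * (relEnt Q p - shannonH Q) + (1 - 2*θ) * relEnt Q p
        = relEnt Q P - Real.log Z := by
    intro Q hQ
    have hterm : ∀ i ∈ Finset.univ, θ * (Q i * Real.log (Q i / p i) + Q i * Real.log (Q i))
        + (1 - 2*θ) * (Q i * Real.log (Q i / p i))
        = Q i * Real.log (Q i / P i) - Q i * Real.log Z := by
      intro i _
      rcases eq_or_lt_of_le (hQ.1 i) with h0 | h0
      · simp [← h0]
      · have hlogP : Real.log (P i) = (1-θ) * Real.log (p i) - Real.log Z := by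
          simp only [hP, pTilt]
          rw [Real.log_div (Real.rpow_pos_of_pos (hpos i) _).ne' hZpos.ne',
            Real.log_rpow (hpos i)]
        rw [Real.log_div h0.ne' (hpos i).ne', Real.log_div h0.ne' (hPpos i).ne', hlogP]
        ring
    have hsum' : ∑ i, Q i * Real.log Z = Real.log Z := by
      rw [← Finset.sum_mul, hQ.2, one_mul]
    have := Finset.sum_congr rfl hterm
    simp only [Finset.sum_add_distrib, Finset.sum_sub_distrib, ← Finset.mul_sum, hsum'] at this
    simp only [relEnt, shannonH]
    linarith [this]
  -- Gibbs inequality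
  have gibbs : ∀ Q : Fin d → ℝ, IsProbVec Q → 0 ≤ relEnt Q P := by
    intro Q hQ
    have h1 : ∀ i ∈ Finset.univ, Q i - P i ≤ Q i * Real.log (Q i / P i) := by
      intro i _
      rcases eq_or_lt_of_le (hQ.1 i) with h0 | h0
      · simp [← h0]; linarith [hPpos i]
      · have h2 := Real.log_le_sub_one_of_pos (div_pos (hPpos i) h0)
        have h3 : Real.log (P i / Q i) = - Real.log (Q i / P i) := by
          rw [Real.log_div (hPpos i).ne' h0.ne', Real.log_div h0.ne' (hPpos i).ne']; ring
        have h4 : Q i * (P i / Q i) = P i := by field_simp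
        rw [h3] at h2
        nlinarith [h0]
    have := Finset.sum_le_sum h1
    rw [Finset.sum_sub_distrib, hQ.2, hPsum] at this
    simpa [relEnt] using this
  have hPP : relEnt P P = 0 := by
    simp only [relEnt]
    apply Finset.sum_eq_zero
    intro i _
    rw [div_self (hPpos i).ne', Real.log_one, mul_zero]
  constructor
  · exact ⟨P, hPprob, le_refl _, rfl⟩
  · rintro v ⟨Q, hQ, hle, rfl⟩
    have kQ := key Q hQ
    have kP := key P hPprob
    rw [hPP] at kP
    have gQ := gibbs Q hQ
    have h12 : 0 ≤ 1 - 2*θ := by linarith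
    nlinarith [mul_nonneg h12 (sub_nonneg.2 hle)]
end

section
/- Let p = (p_1,…,p_d) be a probability distribution on {1,…,d} with all p_i > 0. For θ ∈ [0,1], let P_θ be the tilted distribution P_θ(i) = p_i^{1−θ} / Σ_j p_j^{1−θ}. Then the maximum over all probability distributions Q on {1,…,d} satisfying D(Q‖p) ≤ D(P_θ‖p) of the Shannon entropy H(Q) equals H(P_θ). -/
open scoped BigOperators
open Real

lemma term_expand {x P : ℝ} (hx : 0 ≤ x) (hP : 0 < P) :
    x * Real.log (x / P) = x * Real.log x - x * Real.log P := by
  rcases eq_or_lt_of_le hx with h|h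
  · simp [← h]
  · rw [Real.log_div h.ne' hP.ne']; ring

lemma term_ge {x P : ℝ} (hx : 0 ≤ x) (hP : 0 < P) :
    x - P ≤ x * Real.log (x / P) := by
  rcases eq_or_lt_of_le hx with h|h
  · simp [← h]; linarith
  · have h1 : Real.log (P / x) ≤ P / x - 1 :=
      Real.log_le_sub_one_of_pos (by positivity)
    have h2 : Real.log (x / P) = - Real.log (P / x) := by
      rw [← Real.log_inv]; congr 1; field_simp
    have h3 := mul_le_mul_of_nonneg_left h1 h.le
    have hx' : x * (P / x - 1) = P - x := by field_simp
    rw [h2]; nlinarith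

lemma term_gt {x P : ℝ} (hx : 0 ≤ x) (hP : 0 < P) (hne : x ≠ P) :
    x - P < x * Real.log (x / P) := by
  rcases eq_or_lt_of_le hx with h|h
  · simp [← h]; linarith
  · have hne1 : P / x ≠ 1 := by
      intro hc; apply hne; field_simp at hc; linarith
    have h1 : Real.log (P / x) < P / x - 1 :=
      Real.log_lt_sub_one_of_pos (by positivity) hne1
    have h2 : Real.log (x / P) = - Real.log (P / x) := by
      rw [← Real.log_inv]; congr 1; field_simp
    have h3 := (mul_lt_mul_iff_right₀ h).2 h1
    have hx' : x * (P / x - 1) = P - x := by field_simp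
    rw [h2]; nlinarith

lemma gibbs {d : ℕ} {Q P : Fin d → ℝ} (hQ : IsProbVec Q)
    (hP : ∀ i, 0 < P i) (hPs : ∑ i, P i = 1) : 0 ≤ relEnt Q P := by
  have h : ∑ i, (Q i - P i) ≤ relEnt Q P :=
    Finset.sum_le_sum fun i _ => term_ge (hQ.1 i) (hP i)
  rwa [Finset.sum_sub_distrib, hQ.2, hPs, sub_self] at h

lemma gibbs_eq {d : ℕ} {Q P : Fin d → ℝ} (hQ : IsProbVec Q)
    (hP : ∀ i, 0 < P i) (hPs : ∑ i, P i = 1) (h : relEnt Q P ≤ 0) : Q = P := by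
  by_contra hne
  have ⟨i0, hi0⟩ : ∃ i, Q i ≠ P i := by
    by_contra hc; push_neg at hc; exact hne (funext hc)
  have h2 : ∑ i, (Q i - P i) < relEnt Q P :=
    Finset.sum_lt_sum (fun i _ => term_ge (hQ.1 i) (hP i))
      ⟨i0, Finset.mem_univ _, term_gt (hQ.1 i0) (hP i0) hi0⟩
  rw [Finset.sum_sub_distrib, hQ.2, hPs, sub_self] at h2
  linarith

lemma relEnt_expand {d : ℕ} (Q P : Fin d → ℝ) (hQ0 : ∀ i, 0 ≤ Q i)
    (hP : ∀ i, 0 < P i) :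
    relEnt Q P = -shannonH Q - ∑ i, Q i * Real.log (P i) := by
  unfold relEnt shannonH
  rw [neg_neg, ← Finset.sum_sub_distrib]
  exact Finset.sum_congr rfl fun i _ => term_expand (hQ0 i) (hP i)

lemma relEnt_self {d : ℕ} (P : Fin d → ℝ) (hP : ∀ i, 0 < P i) :
    relEnt P P = 0 := by
  unfold relEnt
  exact Finset.sum_eq_zero fun i _ => by
    rw [div_self (hP i).ne']; simp

theorem stmt9 {d : ℕ} (p : Fin d → ℝ)
    (hpos : ∀ i, 0 < p i) (hsum : ∑ i, p i = 1)
    (θ : ℝ) (hθ : θ ∈ Set.Icc (0 : ℝ) 1) :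
    IsGreatest { v : ℝ | ∃ Q : Fin d → ℝ, IsProbVec Q ∧
        relEnt Q p ≤ relEnt (pTilt p θ) p ∧ v = shannonH Q }
      (shannonH (pTilt p θ)) := by
  obtain ⟨hθ0, hθ1⟩ := hθ
  have hd : 0 < d := by
    rcases Nat.eq_zero_or_pos d with h|h
    · subst h; simp at hsum
    · exact h
  have : Nonempty (Fin d) := ⟨⟨0, hd⟩⟩
  set c : ℝ := ∑ j, p j ^ (1 - θ) with hc_def
  have hc : 0 < c :=
    Finset.sum_pos (fun j _ => Real.rpow_pos_of_pos (hpos j) _) Finset.univ_nonempty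
  have hTpos : ∀ i, 0 < pTilt p θ i := fun i =>
    div_pos (Real.rpow_pos_of_pos (hpos i) _) hc
  have hTsum : ∑ i, pTilt p θ i = 1 := by
    unfold pTilt
    rw [← Finset.sum_div, ← hc_def, div_self hc.ne']
  have hTprob : IsProbVec (pTilt p θ) := ⟨fun i => (hTpos i).le, hTsum⟩
  constructor
  · exact ⟨pTilt p θ, hTprob, le_refl _, rfl⟩
  · rintro v ⟨Q, hQ, hD, rfl⟩
    rcases eq_or_lt_of_le hθ0 with h0|h0
    · -- θ = 0 : pTilt p 0 = p
      have hT : pTilt p θ = p := by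
        funext i
        unfold pTilt
        rw [← h0]
        simp [Real.rpow_one, hsum]
      rw [hT] at hD ⊢
      rw [relEnt_self p hpos] at hD
      rw [gibbs_eq hQ hpos hsum hD]
    · -- θ > 0
      have hlogT : ∀ (R : Fin d → ℝ), (∀ i, 0 ≤ R i) → (∑ i, R i = 1) →
          ∑ i, R i * Real.log (pTilt p θ i)
            = (1 - θ) * (∑ i, R i * Real.log (p i)) - Real.log c := by
        intro R hR0 hRs
        have : ∀ i, R i * Real.log (pTilt p θ i)
            = (1 - θ) * (R i * Real.log (p i)) - R i * Real.log c := by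
          intro i
          unfold pTilt
          rw [Real.log_div (Real.rpow_pos_of_pos (hpos i) _).ne' hc.ne',
            Real.log_rpow (hpos i)]
          ring
        rw [Finset.sum_congr rfl fun i _ => this i, Finset.sum_sub_distrib,
          ← Finset.mul_sum, ← Finset.sum_mul, hRs, one_mul]
      have hQexp := relEnt_expand Q (pTilt p θ) hQ.1 hTpos
      rw [hlogT Q hQ.1 hQ.2] at hQexp
      have hTexp := relEnt_expand (pTilt p θ) (pTilt p θ) hTprob.1 hTpos
      rw [hlogT (pTilt p θ) hTprob.1 hTprob.2, relEnt_self _ hTpos] at hTexp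
      have hQp := relEnt_expand Q p hQ.1 hpos
      have hTp := relEnt_expand (pTilt p θ) p hTprob.1 hpos
      have hg : 0 ≤ relEnt Q (pTilt p θ) := gibbs hQ hTpos hTsum
      have hmul : (1 - θ) * relEnt Q p ≤ (1 - θ) * relEnt (pTilt p θ) p :=
        mul_le_mul_of_nonneg_left hD (by linarith)
      have key : θ * shannonH Q ≤ θ * shannonH (pTilt p θ) := by nlinarith
      exact le_of_mul_le_mul_left key h0
end

section
/- Let p = (p_1,…,p_d) be a probability distribution on {1,…,d} with all p_i > 0, let θ ∈ [0,1), and let P_θ be the tilted distribution P_θ(i) = p_i^{1−θ} / Σ_j p_j^{1−θ}. Then for every probability distribution Q on {1,…,d} with H(Q) = H(P_θ), one has D(Q‖p) − (1/(1−θ))·D(Q‖P_θ) = D(P_θ‖p); equivalently, D(Q‖p) = D(P_θ‖p) + (1/(1−θ))·D(Q‖P_θ) for all such Q. -/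
open scoped BigOperators
open Real

theorem stmt10 {d : ℕ} (p : Fin d → ℝ)
    (hpos : ∀ i, 0 < p i) (hsum : ∑ i, p i = 1)
    (θ : ℝ) (hθ : θ ∈ Set.Ico (0 : ℝ) 1)
    (Q : Fin d → ℝ) (hQ : IsProbVec Q)
    (hH : shannonH Q = shannonH (pTilt p θ)) :
    relEnt Q p - (1 / (1 - θ)) * relEnt Q (pTilt p θ) = relEnt (pTilt p θ) p
    ∧ relEnt Q p = relEnt (pTilt p θ) p + (1 / (1 - θ)) * relEnt Q (pTilt p θ) := by
  obtain ⟨hQ0, hQ1⟩ := hQ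
  obtain ⟨hθ0, hθ1⟩ := hθ
  have hc : (0:ℝ) < 1 - θ := by linarith
  have hZ : 0 < ∑ j, p j ^ (1 - θ) := by
    have hd : Nonempty (Fin d) := by
      by_contra h
      rw [not_nonempty_iff] at h
      rw [Finset.sum_of_isEmpty] at hsum
      norm_num at hsum
    exact Finset.sum_pos (fun j _ => Real.rpow_pos_of_pos (hpos j) _) Finset.univ_nonempty
  have hTpos : ∀ i, 0 < pTilt p θ i := fun i =>
    div_pos (Real.rpow_pos_of_pos (hpos i) _) hZ
  have hlogT : ∀ i, Real.log (pTilt p θ i)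
      = (1 - θ) * Real.log (p i) - Real.log (∑ j, p j ^ (1 - θ)) := by
    intro i
    rw [pTilt, Real.log_div (Real.rpow_pos_of_pos (hpos i) _).ne' hZ.ne',
      Real.log_rpow (hpos i)]
  have split : ∀ (R P : Fin d → ℝ), (∀ i, 0 ≤ R i) → (∀ i, 0 < P i) →
      relEnt R P = (∑ i, R i * Real.log (R i)) - ∑ i, R i * Real.log (P i) := by
    intro R P hR hP
    rw [relEnt, ← Finset.sum_sub_distrib]
    refine Finset.sum_congr rfl fun i _ => ?_
    rcases (hR i).eq_or_lt with h | h
    · simp [← h]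
    · rw [Real.log_div h.ne' (hP i).ne']; ring
  set S := ∑ i, Q i * Real.log (Q i) with hS
  set B := ∑ i, Q i * Real.log (p i) with hB
  set B' := ∑ i, pTilt p θ i * Real.log (p i) with hB'
  set L := Real.log (∑ j, p j ^ (1 - θ)) with hL
  have hTsum : ∑ i, pTilt p θ i = 1 := by
    simp only [pTilt]
    rw [← Finset.sum_div, div_self hZ.ne']
  have hS' : (∑ i, pTilt p θ i * Real.log (pTilt p θ i)) = S := by
    have := hH
    rw [shannonH, shannonH, neg_inj] at this
    rw [← this]
  have h1 : relEnt Q p = S - B := split Q p hQ0 hpos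
  have h2 : relEnt Q (pTilt p θ) = S - ((1 - θ) * B - L) := by
    rw [split Q (pTilt p θ) hQ0 hTpos]
    have : ∑ i, Q i * Real.log (pTilt p θ i) = (1 - θ) * B - L := by
      simp only [hlogT, mul_sub]
      rw [Finset.sum_sub_distrib, ← Finset.sum_mul, hQ1, hB, Finset.mul_sum, one_mul]
      congr 1
      exact Finset.sum_congr rfl fun i _ => by ring
    rw [this]
  have h3 : relEnt (pTilt p θ) p = S - B' := by
    rw [split (pTilt p θ) p (fun i => (hTpos i).le) hpos, hS']
  have h4 : (0:ℝ) = S - ((1 - θ) * B' - L) := by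
    have h0 : relEnt (pTilt p θ) (pTilt p θ) = 0 := by
      simp [relEnt, div_self (hTpos _).ne']
    rw [split (pTilt p θ) (pTilt p θ) (fun i => (hTpos i).le) hTpos, hS'] at h0
    rw [← h0]
    have : ∑ i, pTilt p θ i * Real.log (pTilt p θ i) = (1 - θ) * B' - L := by
      simp only [hlogT, mul_sub]
      rw [Finset.sum_sub_distrib, ← Finset.sum_mul, hTsum, hB', Finset.mul_sum, one_mul]
      congr 1
      exact Finset.sum_congr rfl fun i _ => by ring
    rw [hS'] at this
    rw [this]
  rw [h1, h2, h3]
  constructor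
  · field_simp
    linarith [h4]
  · field_simp
    linarith [h4]
end

section
/- Let d ≥ 2 and let p = (p_1,…,p_d) be a non-uniform probability distribution with all p_i > 0. Then for all sufficiently large n there exists a weighting collection {m_ω}_{ω∈Ω} on {1,…,d}^n with Σ_{ω∈Ω} m_ω(x⃗) = 1 for every x⃗ ∈ {1,…,d}^n (and Σ_{x⃗} P^n(x⃗) m_ω(x⃗) > 0 for each ω), such that Σ_{ω∈Ω} |supp m_ω| · ( Σ_{x⃗} P^n(x⃗) m_ω(x⃗)² ) / ( Σ_{x⃗} P^n(x⃗) m_ω(x⃗) ) ≤ 8d·(n+1)^{3(d−1)} · e^{n·H_{1/2}(p)}. -/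
open scoped BigOperators Classical
open Real

/-- `{m_j}` is a weighting collection: each `m_j` takes values in `[0,1]`
and `Σ_j m_j(x) ≤ 1` for all `x`. -/
def IsWeighting {d n M : ℕ} (m : Fin M → (Fin n → Fin d) → ℝ) : Prop :=
  (∀ j x, 0 ≤ m j x) ∧ (∀ j x, m j x ≤ 1) ∧ (∀ x, ∑ j, m j x ≤ 1)

/-- Cardinality of the support of `m_j`. -/
noncomputable def suppCard {d n : ℕ} (f : (Fin n → Fin d) → ℝ) : ℝ :=
  ((Finset.univ.filter (fun x => f x ≠ 0)).card : ℝ)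

lemma pointwise_sq_bound {p q : Prop} [Decidable p] [Decidable q] (α β : ℝ)
    (hα : 0 ≤ α) (hβ : 0 ≤ β) :
    ((if p then α else 0) + (if q then β else 0)) ^ 2
      ≤ (if p then α * (α + 2 * β) else 0) + (if q then β ^ 2 else 0) := by
  by_cases hp : p <;> by_cases hq : q <;> simp [hp, hq] <;> nlinarith


lemma sqrt_finset_prod {κ : Type*} (s : Finset κ) (f : κ → ℝ) (h : ∀ i ∈ s, 0 ≤ f i) :
    Real.sqrt (∏ i ∈ s, f i) = ∏ i ∈ s, Real.sqrt (f i) := by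
  classical
  induction s using Finset.cons_induction with
  | empty => simp
  | cons a s ha ih =>
    rw [Finset.prod_cons, Finset.prod_cons, Real.sqrt_mul (h a (Finset.mem_cons_self a s)),
      ih (fun i hi => h i (Finset.mem_cons_of_mem hi))]

lemma sum_prod_pow {d n : ℕ} (f : Fin d → ℝ) :
    ∑ x : Fin n → Fin d, (∏ k, f (x k)) = (∑ i, f i) ^ n := by
  classical
  have h : (∑ i, f i) ^ n = ∏ _k : Fin n, (∑ i, f i) := by
    rw [Finset.prod_const, Finset.card_univ, Fintype.card_fin]
  rw [h, Finset.prod_univ_sum (fun _ => Finset.univ) (fun _ i => f i),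
    Fintype.piFinset_univ]

/-- All the per-pair arithmetic, in a clean context. -/
lemma cost_pair_bound (cb Eb Pb V sb S Nr CARD NUM : ℝ)
    (hcb : 0 < cb) (hEb : 0 < Eb) (hPb : 0 < Pb) (hV : 0 < V) (hS : 0 < S) (hNr : 0 < Nr)
    (hCARD : 0 ≤ CARD) (hCARD2 : CARD ≤ 2) (hNUM : 0 ≤ NUM)
    (hNUMle : NUM ≤ cb * (cb + 2 * Eb) * Pb + Eb ^ 2 * V)
    (hcbN : cb ≤ 1 / Nr) (hEbv : Eb = sb / (2 * S)) (hsb : Pb = sb * sb) (hsb0 : 0 < sb) :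
    CARD * NUM / (Pb * cb + V * Eb) ≤ 4 * sb * S / (Nr ^ 2 * V) + 3 * sb / S := by
  have hD0 : 0 < Pb * cb + V * Eb := by positivity
  have step1 : CARD * NUM / (Pb * cb + V * Eb)
      ≤ 2 * (cb * (cb + 2 * Eb) * Pb + Eb ^ 2 * V) / (Pb * cb + V * Eb) := by
    gcongr
  have split : 2 * (cb * (cb + 2 * Eb) * Pb + Eb ^ 2 * V) / (Pb * cb + V * Eb)
      = 2 * (cb ^ 2 * Pb) / (Pb * cb + V * Eb)
        + 2 * (2 * cb * Eb * Pb) / (Pb * cb + V * Eb)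
        + 2 * (Eb ^ 2 * V) / (Pb * cb + V * Eb) := by
    ring
  have t1 : 2 * (cb ^ 2 * Pb) / (Pb * cb + V * Eb) ≤ 2 * (cb ^ 2 * Pb) / (Eb * V) := by
    gcongr
    nlinarith
  have t1e : 2 * (cb ^ 2 * Pb) / (Eb * V) = 4 * cb ^ 2 * sb * S / V := by
    rw [hEbv, hsb]
    field_simp
    ring
  have t1' : 4 * cb ^ 2 * sb * S / V ≤ 4 * sb * S / (Nr ^ 2 * V) := by
    have hcb2 : cb ^ 2 ≤ (1 / Nr) ^ 2 := pow_le_pow_left₀ hcb.le hcbN 2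
    have h1 : 4 * cb ^ 2 * sb * S / V ≤ 4 * (1 / Nr) ^ 2 * sb * S / V := by
      gcongr
    have h2 : 4 * (1 / Nr) ^ 2 * sb * S / V = 4 * sb * S / (Nr ^ 2 * V) := by
      field_simp
    rw [h2] at h1
    exact h1
  have t2 : 2 * (2 * cb * Eb * Pb) / (Pb * cb + V * Eb) ≤ 4 * Eb := by
    rw [div_le_iff₀ hD0]
    nlinarith [mul_pos hV (mul_pos hEb hEb)]
  have t3 : 2 * (Eb ^ 2 * V) / (Pb * cb + V * Eb) ≤ 2 * Eb := by
    rw [div_le_iff₀ hD0]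
    nlinarith [mul_pos (mul_pos hEb hPb) hcb]
  calc CARD * NUM / (Pb * cb + V * Eb)
      ≤ 2 * (cb * (cb + 2 * Eb) * Pb + Eb ^ 2 * V) / (Pb * cb + V * Eb) := step1
    _ = 2 * (cb ^ 2 * Pb) / (Pb * cb + V * Eb)
        + 2 * (2 * cb * Eb * Pb) / (Pb * cb + V * Eb)
        + 2 * (Eb ^ 2 * V) / (Pb * cb + V * Eb) := split
    _ ≤ 2 * (cb ^ 2 * Pb) / (Eb * V) + 4 * Eb + 2 * Eb := by
        exact add_le_add (add_le_add t1 t2) t3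
    _ = 4 * cb ^ 2 * sb * S / V + 3 * sb / S := by
        rw [t1e, hEbv]; ring
    _ ≤ 4 * sb * S / (Nr ^ 2 * V) + 3 * sb / S := by linarith [t1']

/-- Final totalling arithmetic, clean context. -/
lemma total_arith (Zq N Hc S V θ : ℝ) (hθ : 0 < θ) (hNV : θ ≤ N * V) (hN : N ≤ Zq / θ)
    (hHc : Hc ≤ Zq / θ) (hS : 0 ≤ S) (hSZ2 : S ^ 2 ≤ Zq) (hV : 0 < V) (hN0 : 0 < N)
    (hZq : 0 ≤ Zq) :
    Hc + (4 * S ^ 2 / (N * V) + 3 * N) ≤ 8 * Zq / θ := by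
  have h1 : S ^ 2 / (N * V) ≤ Zq / θ := div_le_div₀ hZq hSZ2 hθ hNV
  have h2 : 8 * Zq / θ = Zq / θ + (4 * (Zq / θ) + 3 * (Zq / θ)) := by ring
  have h3 : 4 * S ^ 2 / (N * V) = 4 * (S ^ 2 / (N * V)) := by ring
  linarith

set_option maxHeartbeats 2000000 in
lemma main_construction {ι : Type*} [Fintype ι] [DecidableEq ι]
    (P : ι → ℝ) (hP : ∀ x, 0 < P x)
    (A : Finset ι) (hA : A.Nonempty) (V : ℝ) (hV : 0 < V)
    (hconst : ∀ a ∈ A, P a = V) (θ : ℝ) (hθ : 0 < θ)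
    (hPA : θ ≤ ∑ a ∈ A, P a) :
    ∃ (M : ℕ) (m : Fin M → ι → ℝ),
      (∀ j x, 0 ≤ m j x) ∧ (∀ j x, m j x ≤ 1) ∧ (∀ x, ∑ j, m j x = 1) ∧
      (∀ j, 0 < ∑ x, P x * m j x) ∧
      (∑ j, ((Finset.univ.filter (fun x => m j x ≠ 0)).card : ℝ)
          * (∑ x, P x * (m j x) ^ 2) / (∑ x, P x * m j x)
        ≤ 8 * (∑ x, Real.sqrt (P x)) ^ 2 / θ) := by
  classical
  set s : ι → ℝ := fun x => Real.sqrt (P x) with hs_def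
  set Z : ℝ := ∑ x, s x with hZ_def
  set N : ℕ := A.card with hN_def
  have hNpos : 0 < N := Finset.card_pos.2 hA
  have hNR : (0:ℝ) < N := by exact_mod_cast hNpos
  have hNR1 : (1:ℝ) ≤ N := by exact_mod_cast hNpos
  set L : Finset ι := Finset.univ.filter (fun x => P x ≤ V) with hL_def
  set Hs : Finset ι := Finset.univ.filter (fun x => V < P x) with hHs_def
  have hAL : A ⊆ L := by
    intro a ha
    simp only [hL_def, Finset.mem_filter, Finset.mem_univ, true_and, (hconst a ha).le]
  set S : ℝ := ∑ b ∈ L, s b with hS_def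
  have hs_pos : ∀ x, 0 < s x := fun x => Real.sqrt_pos.2 (hP x)
  have hs_sq : ∀ x, P x = s x * s x := fun x => (Real.mul_self_sqrt (hP x).le).symm
  have hLne : L.Nonempty := hA.mono hAL
  have hSpos : 0 < S := Finset.sum_pos (fun b _ => hs_pos b) hLne
  have hSZ : S ≤ Z := by
    refine Finset.sum_le_sum_of_subset_of_nonneg (Finset.subset_univ L) ?_
    exact fun x _ _ => (hs_pos x).le
  have hZpos : 0 < Z := lt_of_lt_of_le hSpos hSZ
  have hsqV : 0 < Real.sqrt V := Real.sqrt_pos.2 hV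
  have hNV : (N:ℝ) * V = ∑ a ∈ A, P a := by
    rw [Finset.sum_congr rfl hconst, Finset.sum_const, nsmul_eq_mul]
  have hθNV : θ ≤ (N:ℝ) * V := hNV ▸ hPA
  have hNsV : (N:ℝ) * Real.sqrt V ≤ Z := by
    have h1 : ∑ a ∈ A, s a = (N:ℝ) * Real.sqrt V := by
      calc ∑ a ∈ A, s a = ∑ a ∈ A, Real.sqrt V :=
            Finset.sum_congr rfl (fun a ha => by simp only [hs_def]; rw [hconst a ha])
      _ = (N:ℝ) * Real.sqrt V := by rw [Finset.sum_const, nsmul_eq_mul]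
    rw [← h1]
    refine Finset.sum_le_sum_of_subset_of_nonneg (Finset.subset_univ A) ?_
    exact fun x _ _ => (hs_pos x).le
  have hsqVV : Real.sqrt V * Real.sqrt V = V := Real.mul_self_sqrt hV.le
  have hNZ : (N:ℝ) ≤ Z ^ 2 / θ := by
    rw [le_div_iff₀ hθ]
    have h1 : (N:ℝ) * θ ≤ (N:ℝ) * ((N:ℝ) * V) := mul_le_mul_of_nonneg_left hθNV hNR.le
    have h2 : (N:ℝ) * ((N:ℝ) * V) = ((N:ℝ) * Real.sqrt V) * ((N:ℝ) * Real.sqrt V) := by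
      linear_combination (-(N:ℝ) * (N:ℝ)) * hsqVV
    have h3 : ((N:ℝ) * Real.sqrt V) * ((N:ℝ) * Real.sqrt V) ≤ Z * Z :=
      mul_self_le_mul_self (mul_pos hNR hsqV).le hNsV
    nlinarith
  have hθZV : θ ≤ Z * Real.sqrt V := by
    have h2 : (N:ℝ) * V = ((N:ℝ) * Real.sqrt V) * Real.sqrt V := by
      linear_combination (-(N:ℝ)) * hsqVV
    calc θ ≤ (N:ℝ) * V := hθNV
    _ = ((N:ℝ) * Real.sqrt V) * Real.sqrt V := h2
    _ ≤ Z * Real.sqrt V := mul_le_mul_of_nonneg_right hNsV hsqV.le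
  have hHsZ : ((Hs.card : ℝ)) ≤ Z ^ 2 / θ := by
    rw [le_div_iff₀ hθ]
    have h1 : (Hs.card : ℝ) * Real.sqrt V ≤ Z := by
      have h0 : (Hs.card : ℝ) * Real.sqrt V ≤ ∑ b ∈ Hs, s b := by
        rw [← nsmul_eq_mul, ← Finset.sum_const]
        refine Finset.sum_le_sum (fun b hb => ?_)
        have : V ≤ P b := by
          simp only [hHs_def, Finset.mem_filter] at hb; exact hb.2.le
        exact Real.sqrt_le_sqrt this
      refine le_trans h0 ?_
      refine Finset.sum_le_sum_of_subset_of_nonneg (Finset.subset_univ Hs) ?_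
      exact fun x _ _ => (hs_pos x).le
    have hc0 : (0:ℝ) ≤ (Hs.card : ℝ) := Nat.cast_nonneg _
    nlinarith
  -- weights
  set c : ι → ℝ := fun b => (if b ∈ A then (1:ℝ)/2 else 1) / N with hc_def
  set E : ι → ℝ := fun b => s b / (2 * S) with hE_def
  have hc_pos : ∀ b, 0 < c b := by
    intro b; rw [hc_def]; dsimp only
    split <;> exact div_pos (by norm_num) hNR
  have hc_leN : ∀ b, c b ≤ 1 / N := by
    intro b; rw [hc_def]; dsimp only
    split
    · rw [div_le_div_iff₀ hNR hNR]; nlinarith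
    · exact le_refl _
  have hc_le1 : ∀ b, c b ≤ 1 := by
    intro b
    refine (hc_leN b).trans ?_
    rw [div_le_one hNR]; exact hNR1
  have hc_A : ∀ b ∈ A, c b = (1/2) / N := by
    intro b hb; rw [hc_def]; dsimp only; rw [if_pos hb]
  have hc_nA : ∀ b ∉ A, c b = 1 / N := by
    intro b hb; rw [hc_def]; dsimp only; rw [if_neg hb]
  have hE_eq : ∀ b, E b = s b / (2 * S) := fun b => rfl
  have hE_pos : ∀ b, 0 < E b := by
    intro b; rw [hE_eq b]
    exact div_pos (hs_pos b) (by linarith)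
  have hE_le : ∀ b ∈ L, E b ≤ 1 / 2 := by
    intro b hb; rw [hE_eq b]
    rw [div_le_iff₀ (by linarith : (0:ℝ) < 2 * S)]
    have : s b ≤ S := Finset.single_le_sum (fun x _ => (hs_pos x).le) hb
    linarith
  have hEsum : ∑ b ∈ L, E b = 1 / 2 := by
    rw [Finset.sum_congr rfl (fun b _ => hE_eq b)]
    rw [← Finset.sum_div, ← hS_def]
    rw [div_eq_div_iff (by positivity : (2*S) ≠ 0) (by norm_num : (2:ℝ) ≠ 0)]
    ring
  -- the index family
  set g1 : Hs → ι → ℝ := fun h x => if x = (h : ι) then 1 else 0 with hg1_def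
  set g2 : A × L → ι → ℝ :=
    fun q x => (if x = ((q.2 : ι)) then c (q.2 : ι) else 0)
      + (if x = ((q.1 : ι)) then E (q.2 : ι) else 0) with hg2_def
  set mω : (Hs ⊕ (A × L)) → ι → ℝ := Sum.elim g1 g2 with hmw_def
  have hg1app : ∀ (h : Hs) (x : ι), g1 h x = if x = (h:ι) then 1 else 0 := fun _ _ => rfl
  have hg2app : ∀ (q : A × L) (x : ι), g2 q x
      = (if x = ((q.2:ι)) then c (q.2:ι) else 0) + (if x = ((q.1:ι)) then E (q.2:ι) else 0) :=
    fun _ _ => rfl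
  have hmw1 : ∀ (h : Hs) (x : ι), mω (Sum.inl h) x = g1 h x := fun _ _ => rfl
  have hmw2 : ∀ (q : A × L) (x : ι), mω (Sum.inr q) x = g2 q x := fun _ _ => rfl
  clear_value mω g1 g2 E c S Hs L Z s N
  -- helper sums
  have hD : ∀ (t : ι) (β : ℝ), ∑ x, P x * (if x = t then β else 0) = P t * β := by
    intro t β
    have h1 : ∀ x : ι, P x * (if x = t then β else 0) = (if x = t then P x * β else 0) := by
      intro x; split <;> simp
    rw [Finset.sum_congr rfl (fun x _ => h1 x),
      Finset.sum_ite_eq' Finset.univ t (fun x => P x * β)]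
    simp
  have hDpair : ∀ a b : ι,
      ∑ x, P x * ((if x = b then c b else 0) + (if x = a then E b else 0))
        = P b * c b + P a * E b := by
    intro a b
    rw [Finset.sum_congr rfl (fun x _ => mul_add (P x) _ _), Finset.sum_add_distrib,
      hD b (c b), hD a (E b)]
  -- partition pieces
  have hpartHs : ∀ x : ι, ∑ h : Hs, g1 h x = if x ∈ Hs then 1 else 0 := by
    intro x
    rw [Finset.sum_congr rfl (fun h _ => hg1app h x)]
    rw [Finset.sum_coe_sort Hs (fun y => if x = y then (1:ℝ) else 0)]
    exact Finset.sum_ite_eq Hs x (fun _ => (1:ℝ))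
  have hcovL : ∀ x : ι, ∑ b : L, (if x = (b : ι) then c (b:ι) else 0)
      = if x ∈ L then c x else 0 := by
    intro x
    rw [Finset.sum_coe_sort L (fun y => if x = y then c y else 0)]
    exact Finset.sum_ite_eq L x c
  have hballast : ∀ (a : ι) (x : ι), ∑ b : L, (if x = a then E (b:ι) else 0)
      = if x = a then 1/2 else 0 := by
    intro a x
    by_cases hxa : x = a
    · simp only [hxa, if_true]
      rw [Finset.sum_coe_sort L (fun y => E y)]
      exact hEsum
    · simp [hxa]
  have hpart2 : ∀ x : ι, ∑ q : A × L, g2 q x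
      = (N:ℝ) * (if x ∈ L then c x else 0) + (if x ∈ A then 1/2 else 0) := by
    intro x
    rw [Fintype.sum_prod_type]
    have hinner : ∀ a : A, ∑ b : L, g2 (a, b) x
        = (if x ∈ L then c x else 0) + (if x = (a:ι) then 1/2 else 0) := by
      intro a
      rw [Finset.sum_congr rfl (fun b _ => hg2app (a, b) x)]
      rw [Finset.sum_add_distrib, hcovL x, hballast (a:ι) x]
    rw [Finset.sum_congr rfl (fun a _ => hinner a), Finset.sum_add_distrib,
      Finset.sum_const, Finset.card_univ, Fintype.card_coe]
    congr 1
    · rw [nsmul_eq_mul, hN_def]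
    · rw [Finset.sum_coe_sort A (fun y => if x = y then (1:ℝ)/2 else 0)]
      rw [Finset.sum_ite_eq A x (fun _ => (1:ℝ)/2)]
  have hpartition : ∀ x : ι, ∑ ω : Hs ⊕ (A × L), mω ω x = 1 := by
    intro x
    rw [Fintype.sum_sum_type]
    rw [Finset.sum_congr rfl (fun h _ => hmw1 h x), Finset.sum_congr rfl (fun q _ => hmw2 q x),
      hpartHs x, hpart2 x]
    by_cases hxV : P x ≤ V
    · have hxL : x ∈ L := by rw [hL_def]; simp [hxV]
      have hxHs : x ∉ Hs := by rw [hHs_def]; simp [not_lt.2 hxV]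
      by_cases hxA : x ∈ A
      · rw [if_neg hxHs, if_pos hxL, if_pos hxA, hc_A x hxA]
        rw [mul_comm ((N:ℝ)) _, div_mul_cancel₀ _ (ne_of_gt hNR)]
        norm_num
      · rw [if_neg hxHs, if_pos hxL, if_neg hxA, hc_nA x hxA]
        rw [mul_comm ((N:ℝ)) _, div_mul_cancel₀ _ (ne_of_gt hNR)]
        norm_num
    · have hxL : x ∉ L := by rw [hL_def]; simp [hxV]
      have hxHs : x ∈ Hs := by rw [hHs_def]; simp [lt_of_not_ge hxV]
      have hxA : x ∉ A := fun h => hxL (hAL h)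
      rw [if_pos hxHs, if_neg hxL, if_neg hxA]
      ring
  -- cost of singletons
  have hg1_cost : ∀ h : Hs,
      ((Finset.univ.filter (fun x => g1 h x ≠ 0)).card : ℝ)
        * (∑ x, P x * (g1 h x) ^ 2) / (∑ x, P x * g1 h x) ≤ 1 := by
    intro h
    have hsq : ∀ x : ι, (g1 h x) ^ 2 = g1 h x := by
      intro x; rw [hg1app h x]; split <;> norm_num
    have hden : ∑ x, P x * g1 h x = P (h:ι) := by
      rw [Finset.sum_congr rfl (fun x _ => by rw [hg1app h x]), hD (h:ι) 1, mul_one]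
    have hnum : ∑ x, P x * (g1 h x) ^ 2 = P (h:ι) := by
      rw [Finset.sum_congr rfl (fun x _ => by rw [hsq x])]
      exact hden
    have hcard : ((Finset.univ.filter (fun x => g1 h x ≠ 0)).card : ℝ) ≤ 1 := by
      have hsub : Finset.univ.filter (fun x => g1 h x ≠ 0) ⊆ {(h:ι)} := by
        intro x hx
        simp only [Finset.mem_filter, Finset.mem_univ, true_and] at hx
        rw [Finset.mem_singleton]
        by_contra hne
        apply hx
        rw [hg1app h x, if_neg hne]
      have h1 := Finset.card_le_card hsub
      simp only [Finset.card_singleton] at h1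
      exact_mod_cast h1
    rw [hnum, hden, div_le_one (hP _)]
    nlinarith [hP (h:ι)]
  -- cost of pairs
  have hg2_cost : ∀ (a : A) (b : L),
      ((Finset.univ.filter (fun x => g2 (a, b) x ≠ 0)).card : ℝ)
        * (∑ x, P x * (g2 (a, b) x) ^ 2) / (∑ x, P x * g2 (a, b) x)
      ≤ 4 * s (b:ι) * S / ((N:ℝ) ^ 2 * V) + 3 * s (b:ι) / S := by
    intro a b
    have hge : ∀ x, g2 (a, b) x
        = (if x = (b:ι) then c (b:ι) else 0) + (if x = (a:ι) then E (b:ι) else 0) :=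
      fun x => hg2app (a, b) x
    have hPa : P (a:ι) = V := hconst _ a.2
    have hden : ∑ x, P x * g2 (a, b) x = P (b:ι) * c (b:ι) + V * E (b:ι) := by
      rw [Finset.sum_congr rfl (fun x _ => by rw [hge x]), hDpair (a:ι) (b:ι), hPa]
    have hnum : ∑ x, P x * (g2 (a, b) x) ^ 2
        ≤ c (b:ι) * (c (b:ι) + 2 * E (b:ι)) * P (b:ι) + (E (b:ι)) ^ 2 * V := by
      have hpt : ∀ x : ι, P x * (g2 (a, b) x) ^ 2
          ≤ P x * ((if x = (b:ι) then c (b:ι) * (c (b:ι) + 2 * E (b:ι)) else 0)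
              + (if x = (a:ι) then (E (b:ι)) ^ 2 else 0)) := by
        intro x
        rw [hge x]
        exact mul_le_mul_of_nonneg_left
          (pointwise_sq_bound (c (b:ι)) (E (b:ι)) (hc_pos _).le (hE_pos _).le) (hP x).le
      calc ∑ x, P x * (g2 (a, b) x) ^ 2
          ≤ ∑ x, P x * ((if x = (b:ι) then c (b:ι) * (c (b:ι) + 2 * E (b:ι)) else 0)
              + (if x = (a:ι) then (E (b:ι)) ^ 2 else 0)) :=
            Finset.sum_le_sum (fun x _ => hpt x)
        _ = P (b:ι) * (c (b:ι) * (c (b:ι) + 2 * E (b:ι))) + P (a:ι) * (E (b:ι)) ^ 2 := by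
            rw [Finset.sum_congr rfl (fun x _ => mul_add (P x) _ _), Finset.sum_add_distrib,
              hD (b:ι) _, hD (a:ι) _]
        _ = c (b:ι) * (c (b:ι) + 2 * E (b:ι)) * P (b:ι) + (E (b:ι)) ^ 2 * V := by
            rw [hPa]; ring
    have hnum0 : 0 ≤ ∑ x, P x * (g2 (a, b) x) ^ 2 :=
      Finset.sum_nonneg (fun x _ => mul_nonneg (hP x).le (sq_nonneg _))
    have hcard : ((Finset.univ.filter (fun x => g2 (a, b) x ≠ 0)).card : ℝ) ≤ 2 := by
      have hsub : Finset.univ.filter (fun x => g2 (a, b) x ≠ 0)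
          ⊆ insert (b:ι) {(a:ι)} := by
        intro x hx
        simp only [Finset.mem_filter, Finset.mem_univ, true_and] at hx
        rw [Finset.mem_insert, Finset.mem_singleton]
        by_contra hne
        push_neg at hne
        apply hx
        rw [hge x, if_neg hne.1, if_neg hne.2]
        ring
      have h1 := Finset.card_le_card hsub
      have h2 := Finset.card_insert_le (b:ι) ({(a:ι)} : Finset ι)
      simp only [Finset.card_singleton] at h2
      have h3 : (Finset.univ.filter (fun x => g2 (a, b) x ≠ 0)).card ≤ 2 :=
        le_trans h1 (le_trans h2 (by norm_num))
      exact_mod_cast h3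
    rw [hden]
    exact cost_pair_bound (c (b:ι)) (E (b:ι)) (P (b:ι)) V (s (b:ι)) S (N:ℝ) _ _
      (hc_pos _) (hE_pos _) (hP _) hV hSpos hNR (Nat.cast_nonneg _) hcard hnum0 hnum
      (hc_leN _) (hE_eq _) (hs_sq _) (hs_pos _)
  -- assembly
  refine ⟨Fintype.card (Hs ⊕ (A × L)), fun j => mω ((Fintype.equivFin (Hs ⊕ (A × L))).symm j),
    ?_, ?_, ?_, ?_, ?_⟩
  · have key : ∀ (ω : Hs ⊕ (A × L)) (x : ι), 0 ≤ mω ω x := by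
      intro ω x
      rcases ω with h | q
      · rw [hmw1 h x, hg1app h x]
        split <;> norm_num
      · rw [hmw2 q x, hg2app q x]
        apply add_nonneg
        · split
          · exact (hc_pos _).le
          · exact le_refl 0
        · split
          · exact (hE_pos _).le
          · exact le_refl 0
    intro j x
    exact key _ x
  · have key : ∀ (ω : Hs ⊕ (A × L)) (x : ι), mω ω x ≤ 1 := by
      intro ω x
      rcases ω with h | q
      · rw [hmw1 h x, hg1app h x]
        split <;> norm_num
      · rw [hmw2 q x, hg2app q x]
        by_cases hxb : x = (q.2:ι) <;> by_cases hxa : x = (q.1:ι)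
        · rw [if_pos hxb, if_pos hxa]
          have hbA : (q.2:ι) ∈ A := by rw [← hxb, hxa]; exact q.1.2
          have h1 : c (q.2:ι) ≤ 1/2 := by
            rw [hc_A _ hbA, div_le_iff₀ hNR]; nlinarith
          have h2 : E (q.2:ι) ≤ 1/2 := hE_le _ q.2.2
          linarith
        · rw [if_pos hxb, if_neg hxa, add_zero]
          exact hc_le1 _
        · rw [if_neg hxb, if_pos hxa, zero_add]
          exact (hE_le _ q.2.2).trans (by norm_num)
        · rw [if_neg hxb, if_neg hxa]
          norm_num
    intro j x
    exact key _ x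
  · intro x
    exact Eq.trans (Fintype.sum_equiv (Fintype.equivFin (Hs ⊕ (A × L))).symm _
      (fun ω => mω ω x) (fun j => rfl)) (hpartition x)
  · have key : ∀ (ω : Hs ⊕ (A × L)), 0 < ∑ x, P x * mω ω x := by
      intro ω
      rcases ω with h | q
      · rw [Finset.sum_congr rfl (fun x _ => by rw [hmw1 h x, hg1app h x])]
        rw [hD (h:ι) 1, mul_one]
        exact hP _
      · rw [Finset.sum_congr rfl (fun x _ => by rw [hmw2 q x, hg2app q x])]
        rw [hDpair (q.1:ι) (q.2:ι)]
        exact add_pos (mul_pos (hP _) (hc_pos _)) (mul_pos (hP _) (hE_pos _))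
    intro j
    exact key _
  · -- the cost bound
    have hcost2 : ∑ ω : Hs ⊕ (A × L),
        ((Finset.univ.filter (fun x => mω ω x ≠ 0)).card : ℝ)
          * (∑ x, P x * (mω ω x) ^ 2) / (∑ x, P x * mω ω x) ≤ 8 * Z ^ 2 / θ := by
      rw [Fintype.sum_sum_type]
      simp only [hmw1, hmw2]
      have b1 : ∑ h : Hs, ((Finset.univ.filter (fun x => g1 h x ≠ 0)).card : ℝ)
          * (∑ x, P x * (g1 h x) ^ 2) / (∑ x, P x * g1 h x) ≤ (Hs.card : ℝ) := by
        calc ∑ h : Hs, ((Finset.univ.filter (fun x => g1 h x ≠ 0)).card : ℝ)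
              * (∑ x, P x * (g1 h x) ^ 2) / (∑ x, P x * g1 h x)
            ≤ ∑ _h : Hs, (1:ℝ) := Finset.sum_le_sum (fun h _ => hg1_cost h)
          _ = (Hs.card : ℝ) := by
              rw [Finset.sum_const, Finset.card_univ, Fintype.card_coe, nsmul_eq_mul, mul_one]
      have hin : ∀ a : A, ∑ b : L,
          ((Finset.univ.filter (fun x => g2 (a, b) x ≠ 0)).card : ℝ)
            * (∑ x, P x * (g2 (a, b) x) ^ 2) / (∑ x, P x * g2 (a, b) x)
          ≤ 4 * S * S / ((N:ℝ) ^ 2 * V) + 3 := by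
        intro a
        calc ∑ b : L, ((Finset.univ.filter (fun x => g2 (a, b) x ≠ 0)).card : ℝ)
              * (∑ x, P x * (g2 (a, b) x) ^ 2) / (∑ x, P x * g2 (a, b) x)
            ≤ ∑ b : L, (4 * s (b:ι) * S / ((N:ℝ) ^ 2 * V) + 3 * s (b:ι) / S) :=
              Finset.sum_le_sum (fun b _ => hg2_cost a b)
          _ = 4 * S * S / ((N:ℝ) ^ 2 * V) + 3 := by
              rw [Finset.sum_coe_sort L
                (fun y => 4 * s y * S / ((N:ℝ) ^ 2 * V) + 3 * s y / S)]
              have e1 : ∀ y, 4 * s y * S / ((N:ℝ) ^ 2 * V) + 3 * s y / S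
                  = s y * (4 * S / ((N:ℝ) ^ 2 * V) + 3 / S) := fun y => by ring
              rw [Finset.sum_congr rfl (fun y _ => e1 y), ← Finset.sum_mul, ← hS_def]
              field_simp
      have b2 : ∑ q : A × L,
          ((Finset.univ.filter (fun x => g2 q x ≠ 0)).card : ℝ)
            * (∑ x, P x * (g2 q x) ^ 2) / (∑ x, P x * g2 q x)
          ≤ 4 * S ^ 2 / ((N:ℝ) * V) + 3 * (N:ℝ) := by
        rw [Fintype.sum_prod_type]
        calc ∑ a : A, ∑ b : L,
              ((Finset.univ.filter (fun x => g2 (a, b) x ≠ 0)).card : ℝ)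
                * (∑ x, P x * (g2 (a, b) x) ^ 2) / (∑ x, P x * g2 (a, b) x)
            ≤ ∑ _a : A, (4 * S * S / ((N:ℝ) ^ 2 * V) + 3) :=
              Finset.sum_le_sum (fun a _ => hin a)
          _ = (N:ℝ) * (4 * S * S / ((N:ℝ) ^ 2 * V) + 3) := by
              rw [Finset.sum_const, Finset.card_univ, Fintype.card_coe, nsmul_eq_mul, ← hN_def]
          _ = 4 * S ^ 2 / ((N:ℝ) * V) + 3 * (N:ℝ) := by
              field_simp
      have hSZ2 : S ^ 2 ≤ Z ^ 2 := pow_le_pow_left₀ hSpos.le hSZ 2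
      have htot := total_arith (Z ^ 2) (N:ℝ) (Hs.card : ℝ) S V θ hθ hθNV hNZ hHsZ
        hSpos.le hSZ2 hV hNR (sq_nonneg Z)
      linarith
    exact le_trans (le_of_eq (Fintype.sum_equiv (Fintype.equivFin (Hs ⊕ (A × L))).symm _
      (fun ω => ((Finset.univ.filter (fun x => mω ω x ≠ 0)).card : ℝ)
        * (∑ x, P x * (mω ω x) ^ 2) / (∑ x, P x * mω ω x)) (fun j => rfl))) hcost2

set_option maxHeartbeats 1000000

theorem stmt12 {d : ℕ} (hd : 2 ≤ d) (p : Fin d → ℝ)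
    (hpos : ∀ i, 0 < p i) (hsum : ∑ i, p i = 1)
    (hnonunif : ∃ i j, p i ≠ p j) :
    ∃ N : ℕ, ∀ n ≥ N, ∃ (M : ℕ) (m : Fin M → (Fin n → Fin d) → ℝ),
      IsWeighting m ∧
      (∀ x, ∑ j, m j x = 1) ∧
      (∀ j, 0 < ∑ x, prodP p x * m j x) ∧
      (∑ j, suppCard (m j) * (∑ x, prodP p x * (m j x) ^ 2) / (∑ x, prodP p x * m j x)
        ≤ 8 * d * ((n : ℝ) + 1) ^ (3 * (d - 1)) * Real.exp ((n : ℝ) * renyiH p (1 / 2))) := by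
  classical
  have hdpos : 0 < d := by omega
  haveI : Nonempty (Fin d) := ⟨⟨0, hdpos⟩⟩
  refine ⟨0, fun n _ => ?_⟩
  have hP : ∀ x : Fin n → Fin d, 0 < prodP p x :=
    fun x => Finset.prod_pos (fun k _ => hpos _)
  -- the type (empirical count) of a string
  have hcount : ∀ (x : Fin n → Fin d) (i : Fin d),
      (Finset.univ.filter (fun k => x k = i)).card < n + 1 := by
    intro x i
    have h1 := Finset.card_filter_le (Finset.univ : Finset (Fin n)) (fun k => x k = i)
    simp only [Finset.card_univ, Fintype.card_fin] at h1
    omega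
  set typ : (Fin n → Fin d) → (Fin d → Fin (n+1)) :=
    fun x i => ⟨(Finset.univ.filter (fun k => x k = i)).card, hcount x i⟩ with htyp_def
  have hprod_typ : ∀ x, prodP p x = ∏ i, p i ^ ((typ x i : ℕ)) := by
    intro x
    rw [show prodP p x = ∏ k, p (x k) from rfl]
    rw [← Finset.prod_fiberwise_of_maps_to (fun k _ => Finset.mem_univ (x k)) (fun k => p (x k))]
    refine Finset.prod_congr rfl (fun i _ => ?_)
    calc ∏ k ∈ Finset.univ.filter (fun k => x k = i), p (x k)
        = ∏ k ∈ Finset.univ.filter (fun k => x k = i), p i :=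
          Finset.prod_congr rfl (fun k hk => by rw [(Finset.mem_filter.1 hk).2])
      _ = p i ^ ((typ x i : ℕ)) := by rw [Finset.prod_const]
  have hsum1 : ∑ x : Fin n → Fin d, prodP p x = 1 := by
    have h := sum_prod_pow (n := n) p
    calc ∑ x : Fin n → Fin d, prodP p x = ∑ x : Fin n → Fin d, ∏ k, p (x k) := rfl
      _ = (∑ i, p i) ^ n := h
      _ = 1 := by rw [hsum, one_pow]
  -- choose the most probable type class
  have havg : ∃ t₀ : Fin d → Fin (n+1),
      1/((n:ℝ)+1)^d ≤ ∑ x ∈ Finset.univ.filter (fun x => typ x = t₀), prodP p x := by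
    by_contra hcon
    push_neg at hcon
    have hlt : ∑ t : Fin d → Fin (n+1),
        (∑ x ∈ Finset.univ.filter (fun x => typ x = t), prodP p x)
        < ∑ _t : Fin d → Fin (n+1), 1/((n:ℝ)+1)^d :=
      Finset.sum_lt_sum_of_nonempty Finset.univ_nonempty (fun t _ => hcon t)
    rw [Finset.sum_fiberwise_of_maps_to (fun x _ => Finset.mem_univ (typ x)) (prodP p),
      hsum1, Finset.sum_const, Finset.card_univ, Fintype.card_fun, Fintype.card_fin,
      Fintype.card_fin, nsmul_eq_mul] at hlt
    have hne : ((n:ℝ)+1)^d ≠ 0 := by positivity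
    rw [show ((((n+1)^d : ℕ)) : ℝ) = ((n:ℝ)+1)^d by push_cast; ring] at hlt
    rw [mul_one_div, div_self hne] at hlt
    exact lt_irrefl 1 hlt
  obtain ⟨t₀, ht₀⟩ := havg
  set A : Finset (Fin n → Fin d) := Finset.univ.filter (fun x => typ x = t₀) with hA_def
  set V : ℝ := ∏ i, p i ^ ((t₀ i : ℕ)) with hV_def
  have hV : 0 < V := Finset.prod_pos (fun i _ => pow_pos (hpos i) _)
  have hconst : ∀ a ∈ A, prodP p a = V := by
    intro a ha
    rw [hprod_typ a]
    simp only [hA_def, Finset.mem_filter] at ha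
    rw [ha.2]
  have hθpos : (0:ℝ) < 1/((n:ℝ)+1)^d := by positivity
  have hAne : A.Nonempty := by
    by_contra hemp
    rw [Finset.not_nonempty_iff_eq_empty] at hemp
    rw [hemp, Finset.sum_empty] at ht₀
    linarith
  obtain ⟨M, m, h1, h2, h3, h4, h5⟩ :=
    main_construction (prodP p) hP A hAne V hV hconst _ hθpos ht₀
  refine ⟨M, m, ⟨h1, h2, fun x => le_of_eq (h3 x)⟩, h3, h4, ?_⟩
  -- identify the Rényi quantity
  have hZeq : ∑ x : Fin n → Fin d, Real.sqrt (prodP p x) = (∑ i, Real.sqrt (p i))^n := by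
    calc ∑ x : Fin n → Fin d, Real.sqrt (prodP p x)
        = ∑ x : Fin n → Fin d, ∏ k, Real.sqrt (p (x k)) := by
          refine Finset.sum_congr rfl (fun x _ => ?_)
          exact sqrt_finset_prod Finset.univ (fun k => p (x k)) (fun k _ => (hpos _).le)
      _ = (∑ i, Real.sqrt (p i))^n := sum_prod_pow (fun i => Real.sqrt (p i))
  have hZ1 : 0 < ∑ i, Real.sqrt (p i) :=
    Finset.sum_pos (fun i _ => Real.sqrt_pos.2 (hpos i)) Finset.univ_nonempty
  have hren : Real.exp ((n:ℝ) * renyiH p (1/2)) = ((∑ i, Real.sqrt (p i))^n)^2 := by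
    rw [renyiH]
    have h12 : ∑ i, p i ^ ((1:ℝ)/2) = ∑ i, Real.sqrt (p i) :=
      Finset.sum_congr rfl (fun i _ => (Real.sqrt_eq_rpow _).symm)
    rw [h12, show (1:ℝ)/(1 - 1/2) = 2 by norm_num]
    rw [show (n:ℝ) * (2 * Real.log (∑ i, Real.sqrt (p i)))
        = Real.log (((∑ i, Real.sqrt (p i))^n)^2) by
      rw [Real.log_pow, Real.log_pow]; push_cast; ring]
    exact Real.exp_log (by positivity)
  have hsupp : ∀ j, suppCard (m j)
      = ((Finset.univ.filter (fun x => m j x ≠ 0)).card : ℝ) := fun j => rfl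
  rw [Finset.sum_congr rfl (fun j _ => by rw [hsupp j])]
  refine le_trans h5 ?_
  rw [hZeq, hren]
  set W : ℝ := ((∑ i, Real.sqrt (p i))^n)^2 with hW_def
  have hW : 0 < W := by positivity
  have hconv : 8 * W / (1/((n:ℝ)+1)^d) = 8 * W * ((n:ℝ)+1)^d := by
    rw [div_div_eq_mul_div, div_one]
  rw [hconv]
  have hle : ((n:ℝ)+1)^d ≤ (d:ℝ) * ((n:ℝ)+1)^(3*(d-1)) := by
    have hn1 : (1:ℝ) ≤ (n:ℝ)+1 := by
      have := Nat.cast_nonneg (α := ℝ) n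
      linarith
    have e2 : (1:ℝ) ≤ (d:ℝ) := by exact_mod_cast Nat.one_le_of_lt hd
    calc ((n:ℝ)+1)^d ≤ ((n:ℝ)+1)^(3*(d-1)) := pow_le_pow_right₀ hn1 (by omega)
      _ ≤ (d:ℝ) * ((n:ℝ)+1)^(3*(d-1)) := le_mul_of_one_le_left (by positivity) e2
  calc 8 * W * ((n:ℝ)+1)^d ≤ 8 * W * ((d:ℝ) * ((n:ℝ)+1)^(3*(d-1))) := by
        apply mul_le_mul_of_nonneg_left hle (by positivity)
    _ = 8 * (d:ℝ) * ((n:ℝ)+1)^(3*(d-1)) * W := by ring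
end

section
/- Let p = (p_1,…,p_d) be a probability distribution on {1,…,d} with all p_i > 0. Then H_0(p) − H_{1/2}(p) ≥ −(1/4)·H'_{1/2}(p), where H_0(p) = log d, H_{1/2}(p) = 2 log Σ_i √p_i, and H'_{1/2}(p) is the derivative at α = 1/2 of the map α ↦ H_α(p) = (1/(1−α)) log Σ_i p_i^α. In particular, log d − H_{1/2}(p) ≥ −(1/4)·H'_{1/2}(p). -/
open scoped BigOperators
open Real

theorem stmt18 {d : ℕ} (p : Fin d → ℝ)
    (hpos : ∀ i, 0 < p i) (hsum : ∑ i, p i = 1) :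
    renyiH p 0 - renyiH p (1 / 2) ≥ -(1 / 4) * deriv (fun a => renyiH p a) (1 / 2)
    ∧ Real.log d - renyiH p (1 / 2) ≥ -(1 / 4) * deriv (fun a => renyiH p a) (1 / 2)
    ∧ renyiH p 0 = Real.log d
    ∧ renyiH p (1 / 2) = 2 * Real.log (∑ i, Real.sqrt (p i)) := by
  have hd : 0 < d := by
    by_contra h
    push_neg at h
    interval_cases d
    simp at hsum
  set S : ℝ := ∑ i, p i ^ (1/2 : ℝ) with hSdef
  have hSpos : 0 < S := Finset.sum_pos (fun i _ => Real.rpow_pos_of_pos (hpos i) _)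
    ⟨⟨0, hd⟩, Finset.mem_univ _⟩
  set T : ℝ := ∑ i, p i ^ (1/2 : ℝ) * Real.log (p i) with hTdef
  -- derivative computation
  have hg : HasDerivAt (fun a : ℝ => ∑ i, p i ^ a) T (1/2) := by
    rw [hTdef]
    exact HasDerivAt.fun_sum fun i _ => by
      simpa [mul_comm] using (Real.hasStrictDerivAt_const_rpow (hpos i) (1/2)).hasDerivAt
  have hlog : HasDerivAt (fun a : ℝ => Real.log (∑ i, p i ^ a)) (T / S) (1/2) :=
    hg.log (by rw [← hSdef]; exact ne_of_gt hSpos)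
  have h1 : HasDerivAt (fun a : ℝ => 1 - a) (-1) (1/2 : ℝ) := by
    simpa using (hasDerivAt_id (1/2 : ℝ)).const_sub 1
  have h2 : HasDerivAt (fun a : ℝ => (1 - a)⁻¹) 4 (1/2 : ℝ) := by
    have := h1.fun_inv (by norm_num)
    rw [show (4:ℝ) = - -1 / (1 - 1 / 2) ^ 2 by norm_num]
    exact this
  have hmul := h2.fun_mul hlog
  have hderiv : deriv (fun a => renyiH p a) (1/2) = 4 * Real.log S + 2 * (T / S) := by
    have : HasDerivAt (fun a => renyiH p a)
        (4 * Real.log (∑ i, p i ^ (1/2 : ℝ)) + (1 - (1/2 : ℝ))⁻¹ * (T / S)) (1/2) := by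
      simpa [renyiH, one_div] using hmul
    rw [this.deriv, ← hSdef]
    norm_num
  -- key entropy inequality : log S - T/(2S) ≤ log d
  set q : Fin d → ℝ := fun i => p i ^ (1/2 : ℝ) / S with hqdef
  have hqpos : ∀ i, 0 < q i := fun i => div_pos (Real.rpow_pos_of_pos (hpos i) _) hSpos
  have hq1 : ∑ i, q i = 1 := by
    rw [hqdef, ← Finset.sum_div, ← hSdef, div_self (ne_of_gt hSpos)]
  have hstep : ∀ i, q i * (-(Real.log d) - Real.log (q i)) ≤ 1 / d - q i := by
    intro i
    have hdpos : (0:ℝ) < d := by exact_mod_cast hd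
    have hx : (0:ℝ) < 1 / (d * q i) := div_pos one_pos (mul_pos hdpos (hqpos i))
    have h1 := Real.log_le_sub_one_of_pos hx
    have hlogeq : Real.log (1 / (d * q i)) = -(Real.log d) - Real.log (q i) := by
      rw [one_div, Real.log_inv, Real.log_mul (by positivity) (ne_of_gt (hqpos i))]
      ring
    have := mul_le_mul_of_nonneg_left h1 (le_of_lt (hqpos i))
    rw [hlogeq] at this
    calc q i * (-(Real.log d) - Real.log (q i)) ≤ q i * (1 / (↑d * q i) - 1) := this
      _ = 1 / d - q i := by
          have hq0 : q i ≠ 0 := ne_of_gt (hqpos i)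
          have hd0 : (d:ℝ) ≠ 0 := ne_of_gt hdpos
          field_simp
  have hsumstep : ∑ i, q i * (-(Real.log d) - Real.log (q i)) ≤ 0 := by
    calc ∑ i, q i * (-(Real.log d) - Real.log (q i)) ≤ ∑ i, (1 / (d:ℝ) - q i) :=
          Finset.sum_le_sum fun i _ => hstep i
      _ = 0 := by
          rw [Finset.sum_sub_distrib, hq1, Finset.sum_const, Finset.card_univ, Fintype.card_fin,
            nsmul_eq_mul]
          field_simp
          norm_num
  have hexpand : ∑ i, q i * (-(Real.log d) - Real.log (q i))
      = -(Real.log d) - (T / (2 * S) - Real.log S) := by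
    have hlogq : ∀ i, Real.log (q i) = (1/2) * Real.log (p i) - Real.log S := by
      intro i
      rw [hqdef]
      rw [Real.log_div (ne_of_gt (Real.rpow_pos_of_pos (hpos i) _)) (ne_of_gt hSpos),
        Real.log_rpow (hpos i)]
    have : ∑ i, q i * (-(Real.log d) - Real.log (q i))
        = ∑ i, (q i * (-(Real.log d)) - q i * ((1/2) * Real.log (p i)) + q i * Real.log S) := by
      refine Finset.sum_congr rfl fun i _ => ?_
      rw [hlogq i]; ring
    rw [this]
    have e1 : ∑ i, q i * ((1/2) * Real.log (p i)) = T / (2 * S) := by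
      rw [hTdef, Finset.sum_div]
      refine Finset.sum_congr rfl fun i _ => ?_
      rw [hqdef, div_eq_mul_inv, div_eq_mul_inv, mul_inv]
      ring
    rw [Finset.sum_add_distrib, Finset.sum_sub_distrib, ← Finset.sum_mul, ← Finset.sum_mul,
      hq1, e1]
    ring
  have key : Real.log S - T / (2 * S) ≤ Real.log d := by
    rw [hexpand] at hsumstep
    linarith
  -- the four parts
  have part3 : renyiH p 0 = Real.log d := by
    simp [renyiH, Finset.sum_const, Finset.card_univ, nsmul_eq_mul]
  have part4 : renyiH p (1/2) = 2 * Real.log (∑ i, Real.sqrt (p i)) := by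
    have : ∑ i, Real.sqrt (p i) = S := by
      rw [hSdef]
      exact Finset.sum_congr rfl fun i _ => Real.sqrt_eq_rpow (p i)
    rw [this, renyiH]
    norm_num
    rw [hSdef]
  have hTS : T / (2 * S) = T / S / 2 := by ring
  refine ⟨?_, ?_, part3, part4⟩
  · rw [part3, part4, hderiv]
    have : ∑ i, Real.sqrt (p i) = S := by
      rw [hSdef]; exact Finset.sum_congr rfl fun i _ => Real.sqrt_eq_rpow (p i)
    rw [this]
    rw [hTS] at key
    linarith
  · rw [part4, hderiv]
    have : ∑ i, Real.sqrt (p i) = S := by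
      rw [hSdef]; exact Finset.sum_congr rfl fun i _ => Real.sqrt_eq_rpow (p i)
    rw [this]
    rw [hTS] at key
    linarith
end
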